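/- arXiv:0901.1426 — 9 statements merged into one kernel-verified Lean document; each statement's English description precedes it below -/
import Mathlib

section
/- Let F be a field, d ≥ 2, and T = F⟨x₁,…,x_d⟩ the free associative algebra graded by total degree, with T_n the homogeneous component of degree n. Let I ⊆ T be a two-sided ideal generated by homogeneous polynomials f₁, f₂, … each of degree ≥ 2, and let r_ℓ denote the number of generators f_j of degree ℓ. Write T_n = I_n ⊕ B_n where I_n = I ∩ T_n, and set b_n = dim B_n. Then for all n ≥ 2: b_n ≥ d·b_{n-1} − Σ_{j=0}^{n-2} r_{n-j}·b_j. -/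
/-- The degree-`n` homogeneous component of the free algebra `F⟨x₁,…,x_d⟩`. -/
noncomputable def freeAlgGrade (F : Type*) [Field F] (d : ℕ) (n : ℕ) :
    Submodule F (FreeAlgebra F (Fin d)) :=
  (Submodule.span F (Set.range (FreeAlgebra.ι F : Fin d → FreeAlgebra F (Fin d)))) ^ n

/-! Because the generators are homogeneous and `T` is graded, `I_{n+2}` is spanned by the
products `u f_j v` of a generator with homogeneous `u, v`. Such a product either has
`deg u ≥ 1`, and then lies in `T₁ I_{n+1}`, or has `u` a scalar, and then lies in
`f_j T_s = f_j B_s + f_j I_s`, where `f_j I_s ⊆ T₁ I_{n+1}` because `deg f_j ≥ 1`, and `s ≤ n`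
because `deg f_j ≥ 2`. Counting dimensions,
`d^{n+2} ≤ b_{n+2} + d (d^{n+1} - b_{n+1}) + ∑_{s ≤ n} r_{n+2-s} b_s`. -/

open Submodule Set Module

namespace FreeAlgebra

section

variable (R : Type*) [CommSemiring R] {X : Type*}

theorem coe_basisFreeMonoid : ⇑(basisFreeMonoid R X) = FreeMonoid.lift (ι R) := by
  ext w
  simp [basisFreeMonoid, equivMonoidAlgebraFreeMonoid]

theorem span_range_ι_pow (n : ℕ) :
    span R (range (ι R : X → FreeAlgebra R X)) ^ n =
      span R (basisFreeMonoid R X '' {w | w.length = n}) := by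
  induction n with
  | zero =>
    simp [one_eq_span, FreeMonoid.length_eq_zero, coe_basisFreeMonoid]
  | succ n ih =>
    rw [pow_succ', ih, span_mul_span]
    congr 1
    ext a
    simp only [coe_basisFreeMonoid, mem_mul, mem_range, mem_image, mem_ofPred_eq]
    constructor
    · rintro ⟨_, ⟨x, rfl⟩, _, ⟨w, hw, rfl⟩, rfl⟩
      exact ⟨.of x * w, by simp [FreeMonoid.length_mul, hw, add_comm], by simp⟩
    · rintro ⟨w, hw, rfl⟩
      cases w using FreeMonoid.casesOn with
      | one => simp at hw
      | of_mul x w =>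
        refine ⟨_, ⟨x, rfl⟩, _, ⟨w, ?_, rfl⟩, by simp⟩
        simpa [FreeMonoid.length_mul, add_comm] using hw

theorem iSupIndep_span_range_ι_pow :
    iSupIndep (span R (range (ι R : X → FreeAlgebra R X)) ^ ·) := by
  refine iSupIndep_def.2 fun n => ?_
  simp only [span_range_ι_pow]
  refine ((basisFreeMonoid R X).linearIndependent.disjoint_span_image
    (s := {w | w.length = n}) (t := {w | w.length ≠ n}) ?_).mono_right ?_
  · exact disjoint_left.2 fun w hw hw' => hw' hw
  · exact iSup₂_le fun m hm =>
      span_mono (image_mono fun w hw => (show w.length = m from hw).trans_ne hm)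

theorem iSup_span_range_ι_pow :
    ⨆ n, span R (range (ι R : X → FreeAlgebra R X)) ^ n = ⊤ := by
  refine eq_top_iff.2 ((basisFreeMonoid R X).span_eq.ge.trans (span_le.2 ?_))
  rintro _ ⟨w, rfl⟩
  refine le_iSup (span R (range (ι R : X → FreeAlgebra R X)) ^ ·) w.length ?_
  simp only [span_range_ι_pow]
  exact subset_span ⟨w, rfl, rfl⟩

end

theorem finrank_span_range_ι_pow (R : Type*) [CommRing R] [Nontrivial R] {X : Type*} [Fintype X]
    (n : ℕ) :
    finrank R ↥(span R (range (ι R : X → FreeAlgebra R X)) ^ n) = Fintype.card X ^ n := by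
  have hwords : {w : FreeMonoid X | w.length = n} =
      range fun v : Fin n → X => .ofList (List.ofFn v) := by
    ext w
    constructor
    · rintro rfl
      exact ⟨w.toList.get,
        (congrArg FreeMonoid.ofList (List.ofFn_get _)).trans (FreeMonoid.ofList_toList w)⟩
    · rintro ⟨v, rfl⟩
      exact List.length_ofFn
  rw [span_range_ι_pow, hwords, ← range_comp, finrank_span_eq_card, Fintype.card_fun,
    Fintype.card_fin]
  exact (basisFreeMonoid R X).linearIndependent.comp _
    (FreeMonoid.ofList.injective.comp List.ofFn_injective)

end FreeAlgebra

theorem iSupIndep.inf_iSup_eq_of_le {α ι : Type*} [CompleteLattice α] [IsModularLattice α]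
    {T K : ι → α} (hT : iSupIndep T) (hKT : ∀ i, K i ≤ T i) (i : ι) :
    T i ⊓ ⨆ j, K j = K i := by
  have hdisj : (⨆ j, ⨆ _ : j ≠ i, K j) ⊓ T i = ⊥ :=
    ((hT i).symm.mono_left (iSup₂_mono fun j _ => hKT j)).eq_bot
  rw [iSup_split_single K i, inf_comm, sup_inf_assoc_of_le _ (hKT i), hdisj, sup_bot_eq]

section TwoSidedSpan

variable {R A ι : Type*} [CommSemiring R] [Semiring A] [Algebra R A]

variable (R) in
def twoSidedSpan (f : ι → A) : Submodule R A :=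
  span R {x | ∃ j a b, x = a * f j * b}

variable {f : ι → A}

theorem mul_span_singleton_mul_le_twoSidedSpan (P Q : Submodule R A) (j : ι) :
    P * span R {f j} * Q ≤ twoSidedSpan R f := by
  rw [← span_eq P, ← span_eq Q, span_mul_span, span_mul_span]
  refine span_mono ?_
  rintro _ ⟨_, ⟨a, -, _, rfl, rfl⟩, c, -, rfl⟩
  exact ⟨j, a, c, rfl⟩

theorem top_mul_twoSidedSpan_le : ⊤ * twoSidedSpan R f ≤ twoSidedSpan R f := by
  rw [twoSidedSpan, ← span_univ, span_mul_span]
  refine span_mono ?_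
  rintro _ ⟨c, -, _, ⟨j, a, b, rfl⟩, rfl⟩
  exact ⟨j, c * a, b, by simp only [mul_assoc]⟩

theorem pow_mul_twoSidedSpan_inf_pow_le (V : Submodule R A) (k m : ℕ) :
    V ^ k * (twoSidedSpan R f ⊓ V ^ m) ≤ twoSidedSpan R f ⊓ V ^ (k + m) :=
  le_inf ((mul_le_mul' le_top inf_le_left).trans top_mul_twoSidedSpan_le)
    ((mul_le_mul' le_rfl inf_le_right).trans (pow_add V k m).ge)

end TwoSidedSpan

section GradedIdeal

variable {R A ι : Type*} [CommSemiring R] [Semiring A] [Algebra R A]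

def idealGrade (V : Submodule R A) (f : ι → A) (deg : ι → ℕ) (m : ℕ) : Submodule R A :=
  ⨆ (j) (p) (s) (_ : p + deg j + s = m), V ^ p * span R {f j} * V ^ s

variable {V : Submodule R A} {f : ι → A} {deg : ι → ℕ}

theorem le_idealGrade (j : ι) (p s : ℕ) :
    V ^ p * span R {f j} * V ^ s ≤ idealGrade V f deg (p + deg j + s) :=
  le_iSup_of_le j <| le_iSup_of_le p <| le_iSup_of_le s <| le_iSup_of_le rfl le_rfl

theorem idealGrade_le_twoSidedSpan_inf (hf : ∀ j, f j ∈ V ^ deg j) (m : ℕ) :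
    idealGrade V f deg m ≤ twoSidedSpan R f ⊓ V ^ m := by
  refine iSup_le fun j => iSup₂_le fun p s => iSup_le fun hm => le_inf ?_ ?_
  · exact mul_span_singleton_mul_le_twoSidedSpan _ _ j
  · calc V ^ p * span R {f j} * V ^ s ≤ V ^ p * V ^ deg j * V ^ s := by
          gcongr; exact (span_singleton_le_iff_mem _ _).2 (hf j)
      _ = V ^ m := by rw [← pow_add, ← pow_add, hm]

theorem twoSidedSpan_le_iSup_idealGrade (htop : ⨆ n, V ^ n = ⊤) :
    twoSidedSpan R f ≤ ⨆ m, idealGrade V f deg m := by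
  refine span_le.2 ?_
  rintro _ ⟨j, a, b, rfl⟩
  have hle : (⨆ p, V ^ p) * span R {f j} * ⨆ s, V ^ s ≤ ⨆ m, idealGrade V f deg m := by
    simp only [iSup_mul, mul_iSup]
    exact iSup₂_le fun s p => (le_idealGrade j p s).trans (le_iSup (idealGrade V f deg) _)
  rw [htop] at hle
  exact hle (mul_mem_mul (mul_mem_mul mem_top (mem_span_singleton_self _)) mem_top)

end GradedIdeal

section GradedIdealRing

variable {R A ι : Type*} [CommRing R] [Ring A] [Algebra R A]
  {V : Submodule R A} {f : ι → A} {deg : ι → ℕ}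

theorem twoSidedSpan_inf_pow_eq_idealGrade (hf : ∀ j, f j ∈ V ^ deg j)
    (hV : iSupIndep (V ^ ·)) (htop : ⨆ n, V ^ n = ⊤) (m : ℕ) :
    twoSidedSpan R f ⊓ V ^ m = idealGrade V f deg m := by
  refine le_antisymm ?_ (idealGrade_le_twoSidedSpan_inf hf m)
  calc twoSidedSpan R f ⊓ V ^ m ≤ V ^ m ⊓ ⨆ k, idealGrade V f deg k := by
        rw [inf_comm]; exact inf_le_inf_left _ (twoSidedSpan_le_iSup_idealGrade htop)
    _ = idealGrade V f deg m :=
        hV.inf_iSup_eq_of_le (fun k => (idealGrade_le_twoSidedSpan_inf hf k).trans inf_le_right) m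

theorem twoSidedSpan_inf_pow_le (hf : ∀ j, f j ∈ V ^ deg j) (hdeg : ∀ j, 2 ≤ deg j)
    (hV : iSupIndep (V ^ ·)) (htop : ⨆ n, V ^ n = ⊤) (B : ℕ → Submodule R A)
    (hB : ∀ m, B m ⊔ (twoSidedSpan R f ⊓ V ^ m) = V ^ m) (n : ℕ) :
    twoSidedSpan R f ⊓ V ^ (n + 2) ≤ V * (twoSidedSpan R f ⊓ V ^ (n + 1)) ⊔
      (Finset.range (n + 1)).sup fun s => span R (f '' {j | deg j = n + 2 - s}) * B s := by
  rw [twoSidedSpan_inf_pow_eq_idealGrade hf hV htop]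
  refine iSup_le fun j => iSup₂_le fun p s => iSup_le fun hm => ?_
  have hdj := hdeg j
  rcases p with _ | p
  · rw [pow_zero, one_mul, ← hB s, Submodule.mul_sup]
    refine sup_le (le_sup_of_le_right ?_) (le_sup_of_le_left ?_)
    · refine le_trans ?_ (Finset.le_sup (f := fun s => span R (f '' {j | deg j = n + 2 - s}) * B s)
        (Finset.mem_range.2 (by omega : s < n + 1)))
      gcongr
      exact Set.singleton_subset_iff.2 ⟨j, show deg j = n + 2 - s by omega, rfl⟩
    · calc span R {f j} * (twoSidedSpan R f ⊓ V ^ s)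
          ≤ V ^ (1 + (deg j - 1)) * (twoSidedSpan R f ⊓ V ^ s) := by
            gcongr
            rw [Nat.add_sub_cancel' (by omega)]
            exact (span_singleton_le_iff_mem _ _).2 (hf j)
        _ ≤ V * (twoSidedSpan R f ⊓ V ^ (n + 1)) := by
            rw [pow_add, pow_one, mul_assoc]
            gcongr
            exact (pow_mul_twoSidedSpan_inf_pow_le V _ _).trans_eq (by congr 2; omega)
  · refine le_sup_of_le_left ?_
    calc V ^ (p + 1) * span R {f j} * V ^ s = V * (V ^ p * span R {f j} * V ^ s) := by
          rw [pow_succ', mul_assoc, mul_assoc, mul_assoc]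
      _ ≤ V * (twoSidedSpan R f ⊓ V ^ (n + 1)) := by
          gcongr
          exact (le_idealGrade j p s).trans
            ((idealGrade_le_twoSidedSpan_inf hf _).trans_eq (by congr 2; omega))

end GradedIdealRing

namespace Submodule

theorem finrank_finset_sup_le {K V ι : Type*} [DivisionRing K] [AddCommGroup V]
    [Module K V] (s : Finset ι) (S : ι → Submodule K V) [∀ i, FiniteDimensional K (S i)] :
    finrank K ↥(s.sup S) ≤ ∑ i ∈ s, finrank K (S i) := by
  classical
  induction s using Finset.induction with
  | empty => simp
  | insert i s hi ih =>
    rw [Finset.sup_insert, Finset.sum_insert hi]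
    exact (finrank_add_le_finrank_add_finrank _ _).trans (Nat.add_le_add_left ih _)

theorem finrank_add_finrank_of_sup_eq_of_inf_eq_bot {K V : Type*} [DivisionRing K]
    [AddCommGroup V] [Module K V] {p q W : Submodule K V} [FiniteDimensional K W]
    (hsup : p ⊔ q = W) (hinf : p ⊓ q = ⊥) : finrank K p + finrank K q = finrank K W := by
  have : FiniteDimensional K p := finiteDimensional_of_le (hsup ▸ le_sup_left)
  have : FiniteDimensional K q := finiteDimensional_of_le (hsup ▸ le_sup_right)
  rw [← finrank_sup_add_finrank_inf_eq, hsup, hinf, finrank_bot, add_zero]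

variable {F A : Type*} [Field F] [Ring A] [Algebra F A]

theorem finrank_span_mul_le (t : Set A) (ht : t.Finite) (N : Submodule F A)
    [FiniteDimensional F N] : finrank F ↥(span F t * N) ≤ t.ncard * finrank F N := by
  lift t to Finset A using ht
  have hsup : span F (t : Set A) * N = t.sup fun x => N.map (LinearMap.mulLeft F x) := by
    rw [span_eq_iSup_of_singleton_spans, iSup_mul, Finset.sup_eq_iSup]
    simp only [iSup_mul, span_singleton_mul, pointwise_smul_def, Finset.mem_coe]
    rfl
  calc finrank F ↥(span F (t : Set A) * N)
      ≤ ∑ x ∈ t, finrank F ↥(N.map (LinearMap.mulLeft F x)) := by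
        rw [hsup]; exact finrank_finset_sup_le _ _
    _ ≤ ∑ _x ∈ t, finrank F N := Finset.sum_le_sum fun x _ => finrank_map_le _ _
    _ = (t : Set A).ncard * finrank F N := by rw [Finset.sum_const, ncard_coe_finset, smul_eq_mul]

theorem finiteDimensional_span_mul {t : Set A} (ht : t.Finite) (N : Submodule F A)
    [FiniteDimensional F N] : FiniteDimensional F ↥(span F t * N) :=
  Module.Finite.iff_fg.2 ((fg_span ht).mul (Module.Finite.iff_fg.1 inferInstance))

theorem finiteDimensional_span_pow {t : Set A} (ht : t.Finite) (m : ℕ) :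
    FiniteDimensional F ↥(span F t ^ m) :=
  Module.Finite.iff_fg.2 ((fg_span ht).pow m)

end Submodule

theorem finrank_span_pow_add_two_le {F A ι : Type*} [Field F] [Ring A] [Algebra F A]
    {t : Set A} (ht : t.Finite) {f : ι → A} {deg : ι → ℕ} (hf : ∀ j, f j ∈ span F t ^ deg j)
    (hdeg : ∀ j, 2 ≤ deg j) (hfin : ∀ ℓ, {j | deg j = ℓ}.Finite)
    (hV : iSupIndep (span F t ^ ·)) (htop : ⨆ n, span F t ^ n = ⊤) (B : ℕ → Submodule F A)
    (hB : ∀ m, B m ⊔ (twoSidedSpan F f ⊓ span F t ^ m) = span F t ^ m) (n : ℕ) :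
    finrank F ↥(span F t ^ (n + 2)) ≤ finrank F (B (n + 2)) +
      t.ncard * finrank F ↥(twoSidedSpan F f ⊓ span F t ^ (n + 1)) +
      ∑ s ∈ Finset.range (n + 1), {j | deg j = n + 2 - s}.ncard * finrank F (B s) := by
  set V := span F t
  set I := twoSidedSpan F f ⊓ V ^ (n + 1)
  set G := fun s => span F (f '' {j | deg j = n + 2 - s}) * B s
  have hV_fd := finiteDimensional_span_pow (F := F) ht
  have hB_fd : ∀ m, FiniteDimensional F (B m) :=
    fun m => finiteDimensional_of_le (le_sup_left.trans (hB m).le)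
  have hI_fd : FiniteDimensional F I := finiteDimensional_of_le inf_le_right
  have hG_fd : ∀ s, FiniteDimensional F (G s) :=
    fun s => finiteDimensional_span_mul ((hfin (n + 2 - s)).image f) (B s)
  have hVI_fd : FiniteDimensional F ↥(V * I) := finiteDimensional_span_mul ht I
  have hcover : V ^ (n + 2) ≤ B (n + 2) ⊔ (V * I ⊔ (Finset.range (n + 1)).sup G) := by
    rw [← hB (n + 2)]
    exact sup_le_sup_left (twoSidedSpan_inf_pow_le hf hdeg hV htop B hB n) _
  have hG : ∀ s, finrank F (G s) ≤ {j | deg j = n + 2 - s}.ncard * finrank F (B s) := fun s =>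
    (finrank_span_mul_le _ ((hfin _).image f) _).trans
      (Nat.mul_le_mul_right _ (ncard_image_le (hfin _)))
  calc finrank F ↥(V ^ (n + 2))
      ≤ finrank F ↥(B (n + 2) ⊔ (V * I ⊔ (Finset.range (n + 1)).sup G)) :=
        Submodule.finrank_mono hcover
    _ ≤ finrank F (B (n + 2)) + (finrank F ↥(V * I) +
          finrank F ↥((Finset.range (n + 1)).sup G)) :=
        (finrank_add_le_finrank_add_finrank _ _).trans
          (Nat.add_le_add_left (finrank_add_le_finrank_add_finrank _ _) _)
    _ ≤ finrank F (B (n + 2)) + (t.ncard * finrank F I +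
          ∑ s ∈ Finset.range (n + 1), {j | deg j = n + 2 - s}.ncard * finrank F (B s)) :=
        Nat.add_le_add_left (Nat.add_le_add (finrank_span_mul_le t ht I)
          ((finrank_finset_sup_le _ _).trans (Finset.sum_le_sum fun s _ => hG s))) _
    _ = _ := (add_assoc _ _ _).symm

theorem golod_basic_inequality_general
    (F : Type*) [Field F] (d : ℕ)
    (f : ℕ → FreeAlgebra F (Fin d)) (deg : ℕ → ℕ)
    (hdeg : ∀ j, 2 ≤ deg j)
    (hhom : ∀ j, f j ∈ freeAlgGrade F d (deg j))
    (I : Submodule F (FreeAlgebra F (Fin d)))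
    (hI : I = Submodule.span F {x | ∃ j a b, x = a * f j * b})
    (r : ℕ → ℕ)
    (hr : ∀ ℓ, {j | deg j = ℓ}.Finite ∧ {j | deg j = ℓ}.ncard = r ℓ)
    (B : ℕ → Submodule F (FreeAlgebra F (Fin d)))
    (hBdisj : ∀ n, B n ⊓ (I ⊓ freeAlgGrade F d n) = ⊥)
    (hBsup : ∀ n, B n ⊔ (I ⊓ freeAlgGrade F d n) = freeAlgGrade F d n)
    (b : ℕ → ℕ) (hb : ∀ n, b n = Module.finrank F (B n)) :
    ∀ n : ℕ,
      (b (n + 2) : ℝ) ≥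
        d * b (n + 1) - ∑ j ∈ Finset.range (n + 1), (r (n + 2 - j) : ℝ) * b j := by
  intro n
  change I = twoSidedSpan F f at hI
  subst hI
  simp only [freeAlgGrade] at hhom hBdisj hBsup
  set V := span F (range (FreeAlgebra.ι F : Fin d → FreeAlgebra F (Fin d)))
  have hcount := finrank_span_pow_add_two_le (finite_range _) hhom hdeg (fun ℓ => (hr ℓ).1)
    (FreeAlgebra.iSupIndep_span_range_ι_pow F) (FreeAlgebra.iSup_span_range_ι_pow F) B hBsup n
  simp only [FreeAlgebra.finrank_span_range_ι_pow, Fintype.card_fin,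
    ncard_range_of_injective (FreeAlgebra.ι_injective (R := F)), Nat.card_eq_fintype_card,
    fun ℓ => (hr ℓ).2, ← hb] at hcount
  have : FiniteDimensional F ↥(V ^ (n + 1)) := finiteDimensional_span_pow (finite_range _) _
  have hsplit := finrank_add_finrank_of_sup_eq_of_inf_eq_bot (hBsup (n + 1)) (hBdisj (n + 1))
  rw [← hb, FreeAlgebra.finrank_span_range_ι_pow, Fintype.card_fin] at hsplit
  set x := finrank F ↥(twoSidedSpan F f ⊓ V ^ (n + 1))
  have hcount' : (d : ℝ) ^ (n + 2) ≤ b (n + 2) + d * x +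
      ∑ j ∈ Finset.range (n + 1), (r (n + 2 - j) : ℝ) * b j := by exact_mod_cast hcount
  have hsplit' : (b (n + 1) : ℝ) + x = d ^ (n + 1) := by exact_mod_cast hsplit
  linear_combination hcount' + d * hsplit'

theorem golod_basic_inequality
    (F : Type*) [Field F] (d : ℕ) (hd : 2 ≤ d)
    (f : ℕ → FreeAlgebra F (Fin d)) (deg : ℕ → ℕ)
    (hdeg : ∀ j, 2 ≤ deg j)
    (hhom : ∀ j, f j ∈ freeAlgGrade F d (deg j))
    (I : Submodule F (FreeAlgebra F (Fin d)))
    (hI : I = Submodule.span F {x | ∃ j a b, x = a * f j * b})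
    (r : ℕ → ℕ)
    (hr : ∀ ℓ, {j | deg j = ℓ}.Finite ∧ {j | deg j = ℓ}.ncard = r ℓ)
    (B : ℕ → Submodule F (FreeAlgebra F (Fin d)))
    (hBle : ∀ n, B n ≤ freeAlgGrade F d n)
    (hBdisj : ∀ n, B n ⊓ (I ⊓ freeAlgGrade F d n) = ⊥)
    (hBsup : ∀ n, B n ⊔ (I ⊓ freeAlgGrade F d n) = freeAlgGrade F d n)
    (b : ℕ → ℕ) (hb : ∀ n, b n = Module.finrank F (B n)) :
    ∀ n : ℕ,
      (b (n + 2) : ℝ) ≥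
        d * b (n + 1) - ∑ j ∈ Finset.range (n + 1), (r (n + 2 - j) : ℝ) * b j :=
  golod_basic_inequality_general F d f deg hdeg hhom I hI r hr B hBdisj hBsup b hb
end

section
/- Let F be a field, d ≥ 2, T = F⟨x₁,…,x_d⟩, R the span of a set of homogeneous polynomials of degree ≥ 2, I = TRT the two-sided ideal generated by R, and B a graded vector-space complement of I in T (so T = I ⊕ B). Then I = I·T₁ + B·R, where T₁ is the span of x₁,…,x_d. -/
namespace Submodule

variable {R A : Type*} [CommSemiring R] [Semiring A] [Algebra R A]

theorem top_mul_top : (⊤ : Submodule R A) * ⊤ = ⊤ :=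
  top_le_iff.mp <| (mul_one ⊤).symm.trans_le <| mul_le_mul' le_rfl le_top

theorem pow_le_top_mul (M : Submodule R A) {n : ℕ} (hn : n ≠ 0) : M ^ n ≤ ⊤ * M := by
  obtain ⟨k, rfl⟩ := Nat.exists_eq_succ_of_ne_zero hn
  rw [pow_succ]
  exact mul_le_mul' le_top le_rfl

theorem one_sup_top_mul_span_eq_top {s : Set A} (hs : Algebra.adjoin R s = ⊤) :
    1 ⊔ ⊤ * span R s = ⊤ := by
  rw [eq_top_iff]
  rintro a -
  have ha : a ∈ Algebra.adjoin R s := hs ▸ Algebra.mem_top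
  induction ha using Algebra.adjoin_induction with
  | mem x hx =>
    exact mem_sup_right <| one_mul x ▸ mul_mem_mul mem_top (subset_span hx)
  | algebraMap r => exact mem_sup_left (algebraMap_mem r)
  | add x y _ _ hx hy => exact add_mem hx hy
  | mul x y _ _ hx hy =>
    have hmul : (1 ⊔ ⊤ * span R s) * (1 ⊔ ⊤ * span R s) ≤ 1 ⊔ ⊤ * span R s := by
      have hsq : ⊤ * span R s * (⊤ * span R s) ≤ ⊤ * span R s := by
        rw [← mul_assoc]
        exact mul_le_mul' le_top le_rfl
      rw [sup_mul, mul_sup, mul_sup, one_mul, one_mul, mul_one]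
      exact sup_le (sup_le le_sup_left le_sup_right) (sup_le le_sup_right (hsq.trans le_sup_right))
    exact hmul (mul_mem_mul hx hy)

theorem eq_mul_sup_mul_of_codisjoint {P J I B : Submodule R A} (hP : 1 ⊔ ⊤ * P = ⊤)
    (hJ : J ≤ ⊤ * P) (hI : I = ⊤ * J * ⊤) (hIB : I ⊔ B = ⊤) : I = I * P ⊔ B * J := by
  have hI_mul_top : I * ⊤ = I := by rw [hI, mul_assoc, top_mul_top]
  have hIJ : I * J ≤ I * P :=
    calc I * J ≤ I * (⊤ * P) := mul_le_mul' le_rfl hJ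
      _ = I * P := by rw [← mul_assoc, hI_mul_top]
  refine le_antisymm ?_ (sup_le ?_ ?_)
  · calc I = ⊤ * J * (1 ⊔ ⊤ * P) := by rw [hP, hI]
      _ = (I ⊔ B) * J ⊔ I * P := by rw [mul_sup, mul_one, ← mul_assoc, ← hI, hIB]
      _ = I * J ⊔ B * J ⊔ I * P := by rw [sup_mul]
      _ ≤ I * P ⊔ B * J := sup_le (sup_le (hIJ.trans le_sup_left) le_sup_right) le_sup_left
  · exact (mul_le_mul' le_rfl le_top).trans hI_mul_top.le
  · calc B * J ≤ ⊤ * J * 1 := by rw [mul_one]; exact mul_le_mul' le_top le_rfl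
      _ ≤ I := hI ▸ mul_le_mul' le_rfl le_top

end Submodule

theorem golod_ideal_decomposition_general
    (F : Type*) [Field F] (d : ℕ)
    (S : Set (FreeAlgebra F (Fin d)))
    (hS : ∀ s ∈ S, ∃ n, 2 ≤ n ∧ s ∈ freeAlgGrade F d n)
    (R I B : Submodule F (FreeAlgebra F (Fin d)))
    (hR : R = Submodule.span F S)
    (hI : I = ⊤ * R * ⊤)
    (hB : IsCompl I B) :
    I = I * freeAlgGrade F d 1 ⊔ B * R := by
  set V := Submodule.span F (Set.range (FreeAlgebra.ι F : Fin d → FreeAlgebra F (Fin d)))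
  have hR_le : R ≤ ⊤ * V := by
    rw [hR, Submodule.span_le]
    intro s hs
    obtain ⟨n, hn, hsn⟩ := hS s hs
    exact V.pow_le_top_mul (by omega) hsn
  rw [freeAlgGrade, pow_one]
  exact Submodule.eq_mul_sup_mul_of_codisjoint
    (Submodule.one_sup_top_mul_span_eq_top (FreeAlgebra.adjoin_range_ι F (Fin d)))
    hR_le hI hB.codisjoint.eq_top

theorem golod_ideal_decomposition
    (F : Type*) [Field F] (d : ℕ) (hd : 2 ≤ d)
    (S : Set (FreeAlgebra F (Fin d)))
    (hS : ∀ s ∈ S, ∃ n, 2 ≤ n ∧ s ∈ freeAlgGrade F d n)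
    (R I B : Submodule F (FreeAlgebra F (Fin d)))
    (hR : R = Submodule.span F S)
    (hI : I = ⊤ * R * ⊤)
    (hB : IsCompl I B)
    (hBgraded : B = ⨆ n, B ⊓ freeAlgGrade F d n) :
    I = I * freeAlgGrade F d 1 ⊔ B * R :=
  golod_ideal_decomposition_general F d S hS R I B hR hI hB
end

section
/- Let d ≥ 2 be a natural number, and let (b_n)_{n≥0}, (r_ℓ)_{ℓ≥0} be sequences of nonnegative reals with b_0 = 1, b_1 = d, r_0 = r_1 = 0, satisfying b_n ≥ d·b_{n-1} − Σ_{j=0}^{n-2} r_{n-j}·b_j for all n ≥ 2. Suppose there exist reals v > 0, c > 0, u > 0 such that r_{n+2} ≤ c·u^n for all n ≥ 0 and (v·d − c)/(v + u) ≥ v. Then b_n ≥ (d − v)^n for all n ≥ 0. -/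
/-!
Put `w = d - v`. The hypothesis on `v` says `c ≤ v (w - u)`, and we show by strong induction
that `b` grows at least by the factor `w` at each step, which gives `b n ≥ w ^ n`.
If `w b_j ≤ b_{j+1}` for `j ≤ m`, then the geometric convolution `T_m = ∑_{j ≤ m} u^{m-j} b_j`,
which satisfies `T_{m+1} = u T_m + b_{m+1}`, obeys `(w - u) T_m ≤ b_{m+1}`. The error term of
the recursion is at most `c T_m ≤ v (w - u) T_m ≤ v b_{m+1}`, so
`b_{m+2} ≥ d b_{m+1} - v b_{m+1} = w b_{m+1}`.
-/

open Finset

theorem sub_mul_sum_pow_mul_le {b : ℕ → ℝ} {u w : ℝ} (hu : 0 ≤ u) (hb0 : 0 ≤ b 0) :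
    ∀ m, (∀ j ≤ m, w * b j ≤ b (j + 1)) →
      (w - u) * ∑ j ∈ range (m + 1), u ^ (m - j) * b j ≤ b (m + 1) := by
  intro m
  induction m with
  | zero =>
    intro h
    have h0 : w * b 0 ≤ b 1 := h 0 le_rfl
    simp only [zero_add, range_one, sum_singleton, Nat.sub_self, pow_zero, one_mul]
    linarith [mul_nonneg hu hb0]
  | succ m ih =>
    intro h
    have hT := ih fun j hj => h j (by omega)
    have hshift : ∑ j ∈ range (m + 1), u ^ (m + 1 - j) * b j
        = u * ∑ j ∈ range (m + 1), u ^ (m - j) * b j := by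
      rw [mul_sum]
      refine sum_congr rfl fun j hj => ?_
      rw [Nat.sub_add_comm (Nat.lt_succ_iff.mp (mem_range.mp hj)), pow_succ]
      ring
    rw [sum_range_succ, hshift, Nat.sub_self, pow_zero, one_mul]
    have hstep : w * b (m + 1) ≤ b (m + 2) := h (m + 1) le_rfl
    linarith [mul_le_mul_of_nonneg_left hT hu]

theorem sum_mul_le_mul_sum_pow_mul {b r : ℕ → ℝ} {c u : ℝ} (hb : ∀ n, 0 ≤ b n)
    (hru : ∀ n, r (n + 2) ≤ c * u ^ n) (m : ℕ) :
    ∑ j ∈ range (m + 1), r (m + 2 - j) * b j ≤ c * ∑ j ∈ range (m + 1), u ^ (m - j) * b j := by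
  rw [mul_sum]
  refine sum_le_sum fun j hj => ?_
  have hj : m + 2 - j = m - j + 2 := by have := mem_range.mp hj; omega
  rw [hj, ← mul_assoc]
  exact mul_le_mul_of_nonneg_right (hru _) (hb j)

theorem sub_mul_le_succ_of_recursion {b r : ℕ → ℝ} {d v c u : ℝ} (hb : ∀ n, 0 ≤ b n)
    (hb1 : (d - v) * b 0 ≤ b 1)
    (hrec : ∀ n : ℕ,
      b (n + 2) ≥ d * b (n + 1) - ∑ j ∈ range (n + 1), r (n + 2 - j) * b j)
    (hru : ∀ n, r (n + 2) ≤ c * u ^ n) (hv : 0 ≤ v) (hu : 0 ≤ u)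
    (hcv : c ≤ v * (d - v - u)) (n : ℕ) : (d - v) * b n ≤ b (n + 1) := by
  induction n using Nat.strong_induction_on with
  | _ n ih =>
    match n with
    | 0 => exact hb1
    | m + 1 =>
      set T := ∑ j ∈ range (m + 1), u ^ (m - j) * b j
      have hT : (d - v - u) * T ≤ b (m + 1) :=
        sub_mul_sum_pow_mul_le hu (hb 0) m fun j hj => ih j (by omega)
      have hT0 : 0 ≤ T := sum_nonneg fun j _ => mul_nonneg (pow_nonneg hu _) (hb j)
      have herror : c * T ≤ v * b (m + 1) := calc
        c * T ≤ v * (d - v - u) * T := mul_le_mul_of_nonneg_right hcv hT0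
        _ = v * ((d - v - u) * T) := mul_assoc _ _ _
        _ ≤ v * b (m + 1) := mul_le_mul_of_nonneg_left hT hv
      linarith [hrec m, sum_mul_le_mul_sum_pow_mul hb hru m]

theorem golod_shafarevich_growth_bound_general
    (d : ℕ) (b r : ℕ → ℝ)
    (hb0 : b 0 = 1) (hb1 : b 1 = d)
    (hbnn : ∀ n, 0 ≤ b n)
    (hrec : ∀ n : ℕ,
      b (n + 2) ≥ d * b (n + 1) - ∑ j ∈ Finset.range (n + 1), r (n + 2 - j) * b j)
    (v c u : ℝ) (hv : 0 < v) (hc : 0 < c) (hu : 0 < u)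
    (hru : ∀ n : ℕ, r (n + 2) ≤ c * u ^ n)
    (hcond : (v * d - c) / (v + u) ≥ v) :
    ∀ n : ℕ, b n ≥ ((d : ℝ) - v) ^ n := by
  intro n
  have hcv : c ≤ v * (d - v - u) := by
    have := (le_div_iff₀ (by positivity)).mp hcond
    linarith
  have hw : 0 ≤ (d : ℝ) - v := by
    have := pos_of_mul_pos_right (hc.trans_le hcv) hv.le
    linarith
  have hratio := sub_mul_le_succ_of_recursion hbnn (by rw [hb0, hb1]; linarith) hrec hru
    hv.le hu.le hcv
  simpa [hb0] using geom_le hw n fun k _ => hratio k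

theorem golod_shafarevich_growth_bound
    (d : ℕ) (hd : 2 ≤ d) (b r : ℕ → ℝ)
    (hb0 : b 0 = 1) (hb1 : b 1 = d)
    (hbnn : ∀ n, 0 ≤ b n) (hrnn : ∀ n, 0 ≤ r n)
    (hr0 : r 0 = 0) (hr1 : r 1 = 0)
    (hrec : ∀ n : ℕ,
      b (n + 2) ≥ d * b (n + 1) - ∑ j ∈ Finset.range (n + 1), r (n + 2 - j) * b j)
    (v c u : ℝ) (hv : 0 < v) (hc : 0 < c) (hu : 0 < u)
    (hru : ∀ n : ℕ, r (n + 2) ≤ c * u ^ n)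
    (hcond : (v * d - c) / (v + u) ≥ v) :
    ∀ n : ℕ, b n ≥ ((d : ℝ) - v) ^ n :=
  golod_shafarevich_growth_bound_general d b r hb0 hb1 hbnn hrec v c u hv hc hu hru hcond
end

section
/- Let d ≥ 2 be an integer and ε > 0 with d − 2ε > 1. Let (b_n)_{n≥0}, (r_ℓ)_{ℓ≥0} be sequences of nonnegative reals with b_0 = 1, b_1 = d, r_0 = r_1 = 0, satisfying b_n ≥ d·b_{n-1} − Σ_{j=0}^{n-2} r_{n-j}·b_j for all n ≥ 2, and r_ℓ ≤ ε²·(d−2ε)^{ℓ−2} for all ℓ ≥ 2. Then b_n ≥ (d − ε)^n ≥ 1 for all n ≥ 0. -/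
/-!
Put `q = d - ε` and `c = d - 2ε`. By strong induction, `b (k + 1) ≥ q * b k` for every `k`. Indeed,
if this holds up to `n`, then `b j ≤ b (n + 1) / q ^ (n + 1 - j)` for `j ≤ n`, so the correction
term `∑ r (n + 2 - j) * b j` is at most `ε² * b (n + 1) * ∑ c ^ i / q ^ (i + 1)`, and the geometric
series is bounded by `1 / (q - c) = 1 / ε`. Hence `b (n + 2) ≥ d * b (n + 1) - ε * b (n + 1)`.
-/

open Finset

lemma pow_sub_mul_le_of_forall_mul_le_succ {q : ℝ} {b : ℕ → ℝ} (hq : 0 ≤ q) {m : ℕ}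
    (hb : ∀ k < m, q * b k ≤ b (k + 1)) {j : ℕ} (hj : j ≤ m) : q ^ (m - j) * b j ≤ b m := by
  induction m, hj using Nat.le_induction with
  | base => simp
  | succ m hjm ih =>
    calc q ^ (m + 1 - j) * b j = q * (q ^ (m - j) * b j) := by
          rw [Nat.sub_add_comm hjm, pow_succ]; ring
      _ ≤ q * b m := mul_le_mul_of_nonneg_left (ih fun k hk => hb k (by omega)) hq
      _ ≤ b (m + 1) := hb m (by omega)

lemma sum_pow_div_pow_succ_le {c q : ℝ} (hc : 0 ≤ c) (hcq : c < q) (n : ℕ) :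
    ∑ i ∈ range n, c ^ i / q ^ (i + 1) ≤ 1 / (q - c) := by
  have hq : 0 < q := hc.trans_lt hcq
  have hcq' : c / q < 1 := (div_lt_one hq).mpr hcq
  calc ∑ i ∈ range n, c ^ i / q ^ (i + 1) = q⁻¹ * ∑ i ∈ Ico 0 n, (c / q) ^ i := by
        rw [mul_sum, range_eq_Ico]
        refine sum_congr rfl fun i _ => ?_
        rw [div_pow, pow_succ]; field_simp
    _ ≤ q⁻¹ * ((c / q) ^ 0 / (1 - c / q)) :=
        mul_le_mul_of_nonneg_left (geom_sum_Ico_le_of_lt_one (by positivity) hcq')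
          (by positivity)
    _ = 1 / (q - c) := by
        have : q - c ≠ 0 := (sub_pos.mpr hcq).ne'
        field_simp

section GolodShafarevich

variable {D ε : ℝ} {b r : ℕ → ℝ}

lemma golod_shafarevich_correction_le (hε : 0 < ε) (hc : 0 ≤ D - 2 * ε) (hb0 : 0 ≤ b 0)
    (hr : ∀ ℓ, 2 ≤ ℓ → r ℓ ≤ ε ^ 2 * (D - 2 * ε) ^ (ℓ - 2)) {n : ℕ}
    (hb : ∀ k ≤ n, (D - ε) * b k ≤ b (k + 1)) :
    ∑ j ∈ range (n + 1), r (n + 2 - j) * b j ≤ ε * b (n + 1) := by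
  set q := D - ε
  set c := D - 2 * ε
  have hq : 0 < q := by linarith
  have hnonneg : ∀ j ≤ n + 1, 0 ≤ b j := fun j hj =>
    (mul_nonneg (pow_nonneg hq.le _) hb0).trans <| pow_sub_mul_le_of_forall_mul_le_succ hq.le
      (fun k (hk : k < j) => hb k (by omega)) (Nat.zero_le j)
  have hterm : ∀ j ∈ range (n + 1),
      r (n + 2 - j) * b j ≤ ε ^ 2 * b (n + 1) * (c ^ (n - j) / q ^ (n - j + 1)) := by
    intro j hj
    have hjn : j ≤ n := Nat.lt_succ_iff.mp (mem_range.mp hj)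
    have hr_le : r (n + 2 - j) ≤ ε ^ 2 * c ^ (n - j) := by
      simpa [show n + 2 - j - 2 = n - j by omega] using hr (n + 2 - j) (by omega)
    have hb_le : b j ≤ b (n + 1) / q ^ (n - j + 1) := by
      rw [le_div_iff₀ (by positivity), mul_comm, ← show n + 1 - j = n - j + 1 by omega]
      exact pow_sub_mul_le_of_forall_mul_le_succ hq.le (fun k hk => hb k (by omega)) (by omega)
    calc r (n + 2 - j) * b j ≤ ε ^ 2 * c ^ (n - j) * (b (n + 1) / q ^ (n - j + 1)) :=
          mul_le_mul hr_le hb_le (hnonneg j (by omega)) (by positivity)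
      _ = ε ^ 2 * b (n + 1) * (c ^ (n - j) / q ^ (n - j + 1)) := by ring
  have hreflect : ∑ j ∈ range (n + 1), c ^ (n - j) / q ^ (n - j + 1)
      = ∑ i ∈ range (n + 1), c ^ i / q ^ (i + 1) :=
    sum_range_reflect (fun i => c ^ i / q ^ (i + 1)) (n + 1)
  have hB := hnonneg (n + 1) le_rfl
  calc ∑ j ∈ range (n + 1), r (n + 2 - j) * b j
      ≤ ε ^ 2 * b (n + 1) * ∑ i ∈ range (n + 1), c ^ i / q ^ (i + 1) := by
        rw [← hreflect, mul_sum]; exact sum_le_sum hterm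
    _ ≤ ε ^ 2 * b (n + 1) * (1 / ε) := by
        refine mul_le_mul_of_nonneg_left ?_ (by positivity)
        simpa [q, c, show D - ε - (D - 2 * ε) = ε by ring] using
          sum_pow_div_pow_succ_le hc (by linarith : c < q) (n + 1)
    _ = ε * b (n + 1) := by field_simp

lemma golod_shafarevich_mul_le_succ (hε : 0 < ε) (hc : 0 ≤ D - 2 * ε) (hb0 : 0 ≤ b 0)
    (hb1 : (D - ε) * b 0 ≤ b 1)
    (hrec : ∀ n : ℕ, b (n + 2) ≥ D * b (n + 1) - ∑ j ∈ range (n + 1), r (n + 2 - j) * b j)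
    (hr : ∀ ℓ, 2 ≤ ℓ → r ℓ ≤ ε ^ 2 * (D - 2 * ε) ^ (ℓ - 2)) (k : ℕ) :
    (D - ε) * b k ≤ b (k + 1) := by
  induction k using Nat.strong_induction_on with
  | _ k ih =>
    rcases k with _ | n
    · exact hb1
    · have hcorr := golod_shafarevich_correction_le (n := n) hε hc hb0 hr
        fun k hk => ih k (by omega)
      linarith [hrec n]

end GolodShafarevich

theorem golod_shafarevich_eps_growth_bound_general
    (d : ℕ) (ε : ℝ) (hε : 0 < ε) (hdε : 1 < (d : ℝ) - 2 * ε)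
    (b r : ℕ → ℝ)
    (hb0 : b 0 = 1) (hb1 : b 1 = d)
    (hrec : ∀ n : ℕ,
      b (n + 2) ≥ d * b (n + 1) - ∑ j ∈ Finset.range (n + 1), r (n + 2 - j) * b j)
    (hrb : ∀ ℓ : ℕ, 2 ≤ ℓ → r ℓ ≤ ε ^ 2 * ((d : ℝ) - 2 * ε) ^ (ℓ - 2)) :
    ∀ n : ℕ, b n ≥ ((d : ℝ) - ε) ^ n ∧ ((d : ℝ) - ε) ^ n ≥ 1 := by
  intro n
  have hstep := golod_shafarevich_mul_le_succ hε (by linarith) (by rw [hb0]; exact zero_le_one)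
    (by rw [hb0, hb1]; linarith) hrec hrb
  refine ⟨?_, one_le_pow₀ (by linarith)⟩
  simpa [hb0] using
    pow_sub_mul_le_of_forall_mul_le_succ (by linarith) (m := n) (fun k _ => hstep k) (Nat.zero_le n)

theorem golod_shafarevich_eps_growth_bound
    (d : ℕ) (hd : 2 ≤ d) (ε : ℝ) (hε : 0 < ε) (hdε : 1 < (d : ℝ) - 2 * ε)
    (b r : ℕ → ℝ)
    (hb0 : b 0 = 1) (hb1 : b 1 = d)
    (hbnn : ∀ n, 0 ≤ b n) (hrnn : ∀ n, 0 ≤ r n)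
    (hr0 : r 0 = 0) (hr1 : r 1 = 0)
    (hrec : ∀ n : ℕ,
      b (n + 2) ≥ d * b (n + 1) - ∑ j ∈ Finset.range (n + 1), r (n + 2 - j) * b j)
    (hrb : ∀ ℓ : ℕ, 2 ≤ ℓ → r ℓ ≤ ε ^ 2 * ((d : ℝ) - 2 * ε) ^ (ℓ - 2)) :
    ∀ n : ℕ, b n ≥ ((d : ℝ) - ε) ^ n ∧ ((d : ℝ) - ε) ^ n ≥ 1 :=
  golod_shafarevich_eps_growth_bound_general d ε hε hdε b r hb0 hb1 hrec hrb
end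

section
/- Let d ≥ 2, and let v, c, u > 0 be reals with (v·d − c)/(v + u) ≥ v. Let (b_n) be nonnegative reals with b_0 = 1, b_1 = d, and (r_ℓ) nonnegative with r_{n+2} ≤ c·u^n for all n ≥ 0, satisfying b_{n+2} ≥ d·b_{n+1} − Σ_{j=0}^{n} r_{n+2−j}·b_j for all n ≥ 0. Then for all n ≥ 0: v·b_{n+1} ≥ Σ_{j=0}^{n} c·u^{n−j}·b_j. -/
/-!
Write `S n = ∑_{j ≤ n} c u^(n-j) b_j`, so that `S (n+1) = u S n + c b_(n+1)`, and the bound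
`r_(k+2) ≤ c u^k` makes `S n` dominate the correction term of the recurrence, giving
`v b_(n+2) ≥ v d b_(n+1) - v S n`. The claim `v b_(n+1) ≥ S n` then propagates because the
hypothesis on `v` reads `(v + u) v ≤ v d - c`, whence `(v + u) S n ≤ (v d - c) b_(n+1)`.
-/

open Finset

theorem sum_range_succ_mul_pow_sub {R : Type*} [CommSemiring R] (c u : R) (b : ℕ → R) (n : ℕ) :
    ∑ j ∈ range (n + 2), c * u ^ (n + 1 - j) * b j
      = u * ∑ j ∈ range (n + 1), c * u ^ (n - j) * b j + c * b (n + 1) := by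
  rw [sum_range_succ, mul_sum, Nat.sub_self, pow_zero, mul_one]
  congr 1
  refine sum_congr rfl fun j hj => ?_
  rw [Nat.sub_add_comm (mem_range_succ_iff.mp hj), pow_succ]
  ring

theorem sum_range_mul_le_of_le_pow {R : Type*} [CommSemiring R] [PartialOrder R]
    [IsOrderedRing R] {r b : ℕ → R} {c u : R} (hru : ∀ n, r (n + 2) ≤ c * u ^ n)
    (hb : ∀ n, 0 ≤ b n) (n : ℕ) :
    ∑ j ∈ range (n + 1), r (n + 2 - j) * b j ≤ ∑ j ∈ range (n + 1), c * u ^ (n - j) * b j := by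
  refine sum_le_sum fun j hj => mul_le_mul_of_nonneg_right ?_ (hb j)
  rw [Nat.sub_add_comm (mem_range_succ_iff.mp hj)]
  exact hru (n - j)

theorem golod_key_inductive_estimate_general
    (d : ℕ) (v c u : ℝ) (hv : 0 < v) (hu : 0 < u)
    (hcond : (v * d - c) / (v + u) ≥ v)
    (b r : ℕ → ℝ)
    (hb0 : b 0 = 1) (hb1 : b 1 = d)
    (hbnn : ∀ n, 0 ≤ b n)
    (hru : ∀ n : ℕ, r (n + 2) ≤ c * u ^ n)
    (hrec : ∀ n : ℕ,
      b (n + 2) ≥ d * b (n + 1) - ∑ j ∈ Finset.range (n + 1), r (n + 2 - j) * b j) :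
    ∀ n : ℕ, v * b (n + 1) ≥ ∑ j ∈ Finset.range (n + 1), c * u ^ (n - j) * b j := by
  have hvu : 0 < v + u := by linarith
  have hvd : v * (v + u) ≤ v * d - c := (le_div_iff₀ hvu).mp hcond
  intro n
  induction n with
  | zero =>
    simp only [zero_add, range_one, sum_singleton, Nat.sub_self, pow_zero, mul_one, hb0, hb1]
    nlinarith [mul_pos hv hvu]
  | succ n ih =>
    set S := ∑ j ∈ range (n + 1), c * u ^ (n - j) * b j
    have hnext : d * b (n + 1) - S ≤ b (n + 2) :=
      (sub_le_sub_left (sum_range_mul_le_of_le_pow hru hbnn n) _).trans (hrec n)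
    rw [sum_range_succ_mul_pow_sub]
    calc u * S + c * b (n + 1) ≤ v * d * b (n + 1) - v * S := by
          nlinarith [mul_le_mul_of_nonneg_left ih hvu.le,
            mul_le_mul_of_nonneg_right hvd (hbnn (n + 1))]
      _ ≤ v * b (n + 2) := by nlinarith [mul_le_mul_of_nonneg_left hnext hv.le]

theorem golod_key_inductive_estimate
    (d : ℕ) (hd : 2 ≤ d) (v c u : ℝ) (hv : 0 < v) (hc : 0 < c) (hu : 0 < u)
    (hcond : (v * d - c) / (v + u) ≥ v)
    (b r : ℕ → ℝ)
    (hb0 : b 0 = 1) (hb1 : b 1 = d)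
    (hbnn : ∀ n, 0 ≤ b n) (hrnn : ∀ n, 0 ≤ r n)
    (hru : ∀ n : ℕ, r (n + 2) ≤ c * u ^ n)
    (hrec : ∀ n : ℕ,
      b (n + 2) ≥ d * b (n + 1) - ∑ j ∈ Finset.range (n + 1), r (n + 2 - j) * b j) :
    ∀ n : ℕ, v * b (n + 1) ≥ ∑ j ∈ Finset.range (n + 1), c * u ^ (n - j) * b j :=
  golod_key_inductive_estimate_general d v c u hv hu hcond b r hb0 hb1 hbnn hru hrec
end

section
/- Let F be a field, d ≥ 2, T = F⟨x₁,…,x_d⟩, c a positive integer, q = d + d² + ⋯ + d^c, and M₁,…,M_q the list of all nonconstant monomials in x₁,…,x_d of degree at most c. Let n be a positive integer and I ⊆ T a two-sided ideal containing s_j(M₁,…,M_q) for every weakly increasing tuple j ∈ J(q,n), where s_j is the order-symmetric polynomial. Then for every polynomial g ∈ T with zero constant term and deg g ≤ c, we have g^n ∈ I. -/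
open scoped Classical

/-- The set of nonconstant monomials of degree at most `c`. -/
def freeAlgMonomials (F : Type*) [Field F] (d c : ℕ) : Set (FreeAlgebra F (Fin d)) :=
  {x | ∃ k : ℕ, 1 ≤ k ∧ k ≤ c ∧ ∃ w : Fin k → Fin d,
    x = (List.ofFn fun i => FreeAlgebra.ι F (w i)).prod}

/-!
Write `g = ∑ⱼ aⱼ Mⱼ` as a linear combination of the monomials and expand `gⁿ` as a sum over all
words `i : Fin n → Fin q` of `(∏ₖ a_{iₖ}) • M_{i₁} ⋯ M_{iₙ}`. Grouping the words by their sorted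
rearrangement `j`, the coefficient is constant on each group, and the group of `j` sums to the
order-symmetric polynomial `s_j(M)`. Hence `gⁿ` is a linear combination of the `s_j(M)`.
-/

open Finset

lemma pow_sum_smul_eq_sum_tuples {R A ι : Type*} [CommSemiring R] [Semiring A] [Algebra R A]
    [Fintype ι] (M : ι → A) (a : ι → R) (n : ℕ) :
    (∑ j, a j • M j) ^ n =
      ∑ i : Fin n → ι, (∏ k, a (i k)) • (List.ofFn fun k => M (i k)).prod := by
  induction n with
  | zero => simp
  | succ n ih =>
    rw [pow_succ', ih, sum_mul_sum, ← Equiv.sum_comp (Fin.consEquiv fun _ => ι),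
      Fintype.sum_prod_type]
    refine sum_congr rfl fun x _ => sum_congr rfl fun i _ => ?_
    simp only [Fin.prod_univ_succ, List.ofFn_succ, List.prod_cons, Fin.consEquiv_apply,
      Fin.cons_zero, Fin.cons_succ, smul_mul_smul_comm]

lemma iSup_freeAlgGrade_le_span_freeAlgMonomials (F : Type*) [Field F] (d c : ℕ) :
    ⨆ k ∈ Icc 1 c, freeAlgGrade F d k ≤ Submodule.span F (freeAlgMonomials F d c) := by
  refine iSup₂_le fun k hk => ?_
  rw [freeAlgGrade, Submodule.span_pow]
  refine Submodule.span_mono fun x hx => ?_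
  obtain ⟨f, rfl⟩ := Set.mem_pow.1 hx
  choose w hw using fun i => (f i).2
  obtain ⟨hk1, hkc⟩ := mem_Icc.1 hk
  exact ⟨k, hk1, hkc, w, by simp [hw]⟩

section PermOrbit

variable {ι : Type*} [Fintype ι] [DecidableEq ι] {n : ℕ}

noncomputable def permOrbit (j : Fin n → ι) : Finset (Fin n → ι) :=
  univ.filter fun i => ∃ π : Equiv.Perm (Fin n), i = j ∘ π

lemma prod_comp_eq_of_mem_permOrbit {R : Type*} [CommMonoid R] (f : ι → R)
    {i j : Fin n → ι} (hi : i ∈ permOrbit j) : ∏ k, f (i k) = ∏ k, f (j k) := by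
  obtain ⟨π, rfl⟩ := (mem_filter.1 hi).2
  exact Equiv.prod_comp π fun k => f (j k)

variable [LinearOrder ι]

lemma mem_permOrbit_iff_comp_sort_eq {i j : Fin n → ι} (hj : Monotone j) :
    i ∈ permOrbit j ↔ i ∘ Tuple.sort i = j := by
  simp only [permOrbit, mem_filter, mem_univ, true_and]
  constructor
  · rintro ⟨π, rfl⟩
    rw [Tuple.comp_perm_comp_sort_eq_comp_sort, Tuple.sort_eq_refl_iff_monotone.2 hj]
    rfl
  · intro h
    exact ⟨(Tuple.sort i)⁻¹, by rw [← h]; ext; simp⟩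

lemma sum_eq_sum_monotone_sum_permOrbit {M : Type*} [AddCommMonoid M] (φ : (Fin n → ι) → M) :
    ∑ i, φ i = ∑ j ∈ univ.filter Monotone, ∑ i ∈ permOrbit j, φ i := by
  have hsorted : ∀ i ∈ (univ : Finset (Fin n → ι)),
      i ∘ Tuple.sort i ∈ univ.filter Monotone := fun i _ =>
    mem_filter.2 ⟨mem_univ _, Tuple.monotone_sort i⟩
  rw [← sum_fiberwise_of_maps_to hsorted]
  refine sum_congr rfl fun j hj => sum_congr ?_ fun _ _ => rfl
  ext i
  rw [mem_permOrbit_iff_comp_sort_eq (mem_filter.1 hj).2, mem_filter]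
  simp

theorem pow_mem_of_forall_orbitSum_mem {R A : Type*} [CommSemiring R] [Semiring A]
    [Algebra R A] (M : ι → A) (I : Submodule R A)
    (hs : ∀ j : Fin n → ι, Monotone j →
      ∑ i ∈ permOrbit j, (List.ofFn fun k => M (i k)).prod ∈ I)
    {g : A} (hg : g ∈ Submodule.span R (Set.range M)) :
    g ^ n ∈ I := by
  obtain ⟨a, rfl⟩ := (Submodule.mem_span_range_iff_exists_fun R).1 hg
  rw [pow_sum_smul_eq_sum_tuples, sum_eq_sum_monotone_sum_permOrbit]
  refine Submodule.sum_mem I fun j hj => ?_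
  rw [sum_congr rfl fun i hi => by rw [prod_comp_eq_of_mem_permOrbit a hi], ← smul_sum]
  exact I.smul_mem _ (hs j (mem_filter.1 hj).2)

end PermOrbit

theorem power_in_ideal_of_order_symmetric_general
    (F : Type*) [Field F] (d : ℕ)
    (c : ℕ) (q : ℕ)
    (M : Fin q → FreeAlgebra F (Fin d))
    (hMran : Set.range M = freeAlgMonomials F d c)
    (n : ℕ)
    (I : Submodule F (FreeAlgebra F (Fin d)))
    (hs : ∀ j : Fin n → Fin q, Monotone j →
      (∑ i ∈ Finset.univ.filter
          (fun i : Fin n → Fin q => ∃ π : Equiv.Perm (Fin n), i = j ∘ ⇑π),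
        (List.ofFn fun k => M (i k)).prod) ∈ I)
    (g : FreeAlgebra F (Fin d))
    (hg : g ∈ ⨆ k ∈ Finset.Icc 1 c, freeAlgGrade F d k) :
    g ^ n ∈ I := by
  have hspan : g ∈ Submodule.span F (Set.range M) := by
    rw [hMran]
    exact iSup_freeAlgGrade_le_span_freeAlgMonomials F d c hg
  exact pow_mem_of_forall_orbitSum_mem M I hs hspan

theorem power_in_ideal_of_order_symmetric
    (F : Type*) [Field F] (d : ℕ) (hd : 2 ≤ d)
    (c : ℕ) (hc : 1 ≤ c) (q : ℕ) (hq : q = ∑ k ∈ Finset.Icc 1 c, d ^ k)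
    (M : Fin q → FreeAlgebra F (Fin d))
    (hMinj : Function.Injective M)
    (hMran : Set.range M = freeAlgMonomials F d c)
    (n : ℕ) (hn : 1 ≤ n)
    (I : Submodule F (FreeAlgebra F (Fin d)))
    (hIl : ∀ a : FreeAlgebra F (Fin d), ∀ x ∈ I, a * x ∈ I)
    (hIr : ∀ a : FreeAlgebra F (Fin d), ∀ x ∈ I, x * a ∈ I)
    (hs : ∀ j : Fin n → Fin q, Monotone j →
      (∑ i ∈ Finset.univ.filter
          (fun i : Fin n → Fin q => ∃ π : Equiv.Perm (Fin n), i = j ∘ ⇑π),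
        (List.ofFn fun k => M (i k)).prod) ∈ I)
    (g : FreeAlgebra F (Fin d))
    (hg : g ∈ ⨆ k ∈ Finset.Icc 1 c, freeAlgGrade F d k) :
    g ^ n ∈ I :=
  power_in_ideal_of_order_symmetric_general F d c q M hMran n I hs g hg
end

section
/- Let F be a field and d ≥ 2, and let ε > 0 satisfy d − 2ε > 1. Then there exists a sequence f₁, f₂, … of homogeneous polynomials in T = F⟨x₁,…,x_d⟩, each of degree ≥ 2, such that: (1) for every g ∈ T with zero constant term there exists n with g^n in the two-sided ideal I generated by the f_j; and (2) for every ℓ ≥ 2, the number r_ℓ of f_j of degree ℓ satisfies r_ℓ ≤ ε²·(d−2ε)^{ℓ−2}. -/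
/-- The subspace of polynomials with zero constant term (degrees ≥ 1). -/
noncomputable def freeAlgAug (F : Type*) [Field F] (d : ℕ) :
    Submodule F (FreeAlgebra F (Fin d)) :=
  ⨆ k : ℕ, freeAlgGrade F d (k + 1)

/-!
Group the nonempty words into blocks, block `m` consisting of the words of length at most `m + 1`,
and choose block sizes `s m`. The relators of block `m` are, for each multiset `M` of `s m` words,
the sum of the monomials `w₁ ⋯ wₙ` over all orderings `(w₁, …, wₙ)` of `M`. An element `g` with zero
constant term is a combination of the words of some block, and expanding `g ^ s m` and grouping the
terms by multiset shows that `g ^ s m` lies in the span of these relators.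
Block `m` has at most `(s m + 1) ^ #words` relators, all of degree in `[s m, (m + 1) s m]`. Taking
`s (m + 1) > (m + 1) s m` makes these degree intervals disjoint, and taking `s m` large makes the
polynomial count smaller than `ε² (d - 2ε) ^ (s m - 2)`, which bounds the number of relators of any
degree `ℓ ≥ s m`.
-/

open Submodule

section Symmetrization

variable {R A ι : Type*} [CommSemiring R] [Semiring A] [Algebra R A] [Fintype ι]

def Sym.ofFn {n : ℕ} (σ : Fin n → ι) : Sym ι n := ⟨List.ofFn σ, by simp⟩

theorem pow_sum_smul_eq_sum_ofFn (c : ι → R) (v : ι → A) (n : ℕ) :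
    (∑ i, c i • v i) ^ n =
      ∑ σ : Fin n → ι, (∏ j, c (σ j)) • (List.ofFn fun j => v (σ j)).prod := by
  induction n with
  | zero => simp
  | succ n ih =>
    rw [pow_succ', ih, Finset.sum_mul_sum, ← (Fin.consEquiv fun _ => ι).sum_comp,
      Fintype.sum_prod_type]
    refine Finset.sum_congr rfl fun i _ => Finset.sum_congr rfl fun σ _ => ?_
    simp [Fin.consEquiv, Fin.prod_univ_succ, List.ofFn_succ, smul_smul, mul_comm]

variable [DecidableEq ι]

def symmetrizedProd (v : ι → A) {n : ℕ} (M : Sym ι n) : A :=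
  ∑ σ : Fin n → ι with Sym.ofFn σ = M, (List.ofFn fun j => v (σ j)).prod

theorem pow_sum_smul_eq_sum_symmetrizedProd (c : ι → R) (v : ι → A) (n : ℕ) :
    (∑ i, c i • v i) ^ n =
      ∑ M : Sym ι n, ((M : Multiset ι).map c).prod • symmetrizedProd v M := by
  rw [pow_sum_smul_eq_sum_ofFn, ← Finset.sum_fiberwise _ Sym.ofFn]
  refine Finset.sum_congr rfl fun M _ => ?_
  rw [symmetrizedProd, Finset.smul_sum]
  refine Finset.sum_congr rfl fun σ hσ => ?_
  rw [← (Finset.mem_filter.mp hσ).2]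
  simp [Sym.ofFn, List.prod_ofFn]

theorem pow_mem_span_symmetrizedProd (v : ι → A) {g : A} (hg : g ∈ span R (Set.range v))
    (n : ℕ) :
    g ^ n ∈ span R (Set.range (symmetrizedProd v (n := n))) := by
  obtain ⟨c, rfl⟩ := (mem_span_range_iff_exists_fun R).mp hg
  rw [pow_sum_smul_eq_sum_symmetrizedProd]
  exact sum_mem fun M _ => smul_mem _ _ (subset_span ⟨M, rfl⟩)

theorem symmetrizedProd_mem_pow (V : Submodule R A) (v : ι → A) (k : ι → ℕ)
    (hv : ∀ i, v i ∈ V ^ k i) {n : ℕ} (M : Sym ι n) :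
    symmetrizedProd v M ∈ V ^ ((M : Multiset ι).map k).sum := by
  refine sum_mem fun σ hσ => ?_
  rw [← (Finset.mem_filter.mp hσ).2]
  simpa [Sym.ofFn, List.sum_ofFn] using
    SetLike.list_prod_ofFn_mem_graded (fun j => k (σ j)) _ fun j => hv (σ j)

end Symmetrization

theorem span_range_pow {R A X : Type*} [CommSemiring R] [Semiring A] [Algebra R A] (x : X → A)
    (n : ℕ) :
    span R (Set.range x) ^ n =
      span R (Set.range fun w : Fin n → X => (List.ofFn fun j => x (w j)).prod) := by
  rw [span_pow]
  congr 1
  ext a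
  rw [Set.mem_pow, Set.mem_range]
  constructor
  · rintro ⟨f, rfl⟩
    choose w hw using fun j => (f j).2
    exact ⟨w, by simp [hw]⟩
  · rintro ⟨w, rfl⟩
    exact ⟨fun j => ⟨x (w j), w j, rfl⟩, rfl⟩

open Filter

theorem Sym.card_le_succ_pow (α : Type*) [Finite α] (n : ℕ) :
    Nat.card (Sym α n) ≤ (n + 1) ^ Nat.card α := by
  classical
  let count : Sym α n → α → Fin (n + 1) := fun M a =>
    ⟨(M : Multiset α).count a, Nat.lt_succ_of_le ((Multiset.count_le_card a _).trans M.2.le)⟩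
  have hcount : Function.Injective count := fun M M' h =>
    Sym.coe_injective (Multiset.ext.mpr fun a => congrArg Fin.val (congrFun h a))
  simpa [Nat.card_fun] using Nat.card_le_card_of_injective count hcount

theorem Sym.eventually_card_le_mul_pow (α : Type*) [Finite α] {δ c : ℝ}
    (hδ : 0 < δ) (hc : 1 < c) : ∀ᶠ n in atTop, (Nat.card (Sym α n) : ℝ) ≤ δ * c ^ n := by
  have hlittle := (isLittleO_pow_const_const_pow_of_one_lt (R := ℝ) (Nat.card α) hc).comp_tendsto
    (tendsto_add_atTop_nat 1)
  filter_upwards [hlittle.def (div_pos hδ (by linarith))] with n hn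
  have hc0 : 0 < c := by linarith
  simp only [Function.comp_apply, Real.norm_eq_abs, abs_pow, Nat.abs_cast, abs_of_pos hc0] at hn
  calc (Nat.card (Sym α n) : ℝ) ≤ ((n + 1 : ℕ) : ℝ) ^ Nat.card α := by
        exact_mod_cast Sym.card_le_succ_pow α n
    _ ≤ δ / c * c ^ (n + 1) := hn
    _ = δ * c ^ n := by field_simp; ring

theorem exists_seq_forall_and_lt_of_eventually {P : ℕ → ℕ → Prop}
    (h : ∀ m, ∀ᶠ n in atTop, P m n) (t : ℕ → ℕ → ℕ) :
    ∃ s : ℕ → ℕ, ∀ m, P m (s m) ∧ t m (s m) < s (m + 1) := by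
  choose next hnext using fun m a => ((h m).and (eventually_gt_atTop a)).exists
  let s : ℕ → ℕ := fun m => Nat.rec (next 0 0) (fun k sk => next (k + 1) (t k sk)) m
  refine ⟨s, fun m => ⟨?_, (hnext (m + 1) _).2⟩⟩
  cases m with
  | zero => exact (hnext 0 0).1
  | succ m => exact (hnext (m + 1) _).1

theorem Sigma.fst_eq_of_deg_eq {β : ℕ → Type*} {s t : ℕ → ℕ} (hst : ∀ m, s m ≤ t m)
    (hts : ∀ m, t m < s (m + 1)) {deg : Sigma β → ℕ}
    (hdeg : ∀ j, s j.1 ≤ deg j ∧ deg j ≤ t j.1) {j j' : Sigma β} (h : deg j = deg j') :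
    j.1 = j'.1 := by
  have hs : StrictMono s := strictMono_nat_of_lt_succ fun m => (hst m).trans_lt (hts m)
  have key : ∀ {i i' : Sigma β}, deg i = deg i' → ¬ i.1 < i'.1 := by
    intro i i' h hlt
    have := (hdeg i).2.trans_lt ((hts i.1).trans_le (hs.monotone hlt))
    have := (hdeg i').1
    omega
  exact le_antisymm (not_lt.mp (key h.symm)) (not_lt.mp (key h))

theorem exists_separated_seq_card_sym_le (α : ℕ → Type*) [∀ m, Finite (α m)] {δ c : ℝ} (hδ : 0 < δ)
    (hc : 1 < c) :
    ∃ s : ℕ → ℕ, ∀ m, 2 ≤ s m ∧ (Nat.card (Sym (α m) (s m)) : ℝ) ≤ δ * c ^ (s m - 2) ∧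
      (m + 1) * s m < s (m + 1) := by
  have hc0 : 0 < c := by linarith
  have hP : ∀ m, ∀ᶠ n in atTop, 2 ≤ n ∧ (Nat.card (Sym (α m) n) : ℝ) ≤ δ * c ^ (n - 2) := by
    intro m
    filter_upwards [eventually_ge_atTop 2,
      Sym.eventually_card_le_mul_pow (α m) (div_pos hδ (pow_pos hc0 2)) hc] with n hn hcard
    refine ⟨hn, hcard.trans_eq ?_⟩
    rw [← Nat.sub_add_cancel hn, pow_add, Nat.add_sub_cancel]
    field_simp
  obtain ⟨s, hs⟩ := exists_seq_forall_and_lt_of_eventually hP fun m n => (m + 1) * n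
  exact ⟨s, fun m => ⟨(hs m).1.1, (hs m).1.2, (hs m).2⟩⟩

theorem Sigma.finite_and_ncard_deg_eq_le {β : ℕ → Type*} [∀ m, Finite (β m)] {s t : ℕ → ℕ}
    (hst : ∀ m, s m ≤ t m) (hts : ∀ m, t m < s (m + 1)) {deg : Sigma β → ℕ}
    (hdeg : ∀ j, s j.1 ≤ deg j ∧ deg j ≤ t j.1) {B : ℕ → ℝ} (hB : Monotone B)
    (hβ : ∀ m, (Nat.card (β m) : ℝ) ≤ B (s m)) (ℓ : ℕ) (hBℓ : 0 ≤ B ℓ) :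
    {j | deg j = ℓ}.Finite ∧ ({j | deg j = ℓ}.ncard : ℝ) ≤ B ℓ := by
  rcases Set.eq_empty_or_nonempty {j | deg j = ℓ} with hempty | ⟨j₀, hj₀⟩
  · simp [hempty, hBℓ]
  have hsub : {j | deg j = ℓ} ⊆ Set.range (Sigma.mk (β := β) j₀.1) := by
    rintro ⟨m, b⟩ hj
    obtain rfl : j₀.1 = m := Sigma.fst_eq_of_deg_eq hst hts hdeg (hj₀.trans hj.symm)
    exact ⟨b, rfl⟩
  refine ⟨(Set.finite_range _).subset hsub, ?_⟩
  calc ({j | deg j = ℓ}.ncard : ℝ) ≤ Nat.card (β j₀.1) := by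
        rw [← Set.ncard_range_of_injective sigma_mk_injective]
        exact_mod_cast Set.ncard_le_ncard hsub
    _ ≤ B (s j₀.1) := hβ _
    _ ≤ B ℓ := hB (hj₀ ▸ (hdeg j₀).1)

namespace GolodShafarevich

-- `⟨k, w⟩` is the word `w` of length `k + 1`.
abbrev ShortWord (d m : ℕ) := Σ k : Fin (m + 1), Fin (k + 1) → Fin d

namespace ShortWord

variable {d m : ℕ}

def length (w : ShortWord d m) : ℕ := w.1 + 1

variable (F : Type*) [Field F]

noncomputable def monomial (w : ShortWord d m) : FreeAlgebra F (Fin d) :=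
  (List.ofFn fun j => FreeAlgebra.ι F (w.2 j)).prod

theorem monomial_mem_freeAlgGrade (w : ShortWord d m) :
    w.monomial F ∈ freeAlgGrade F d w.length := by
  rw [freeAlgGrade, span_range_pow]
  exact subset_span ⟨w.2, rfl⟩

theorem monotone_span_range_monomial (d : ℕ) :
    Monotone fun m => span F (Set.range (monomial F : ShortWord d m → _)) := by
  intro m m' hm
  refine span_mono ?_
  rintro _ ⟨⟨k, w⟩, rfl⟩
  exact ⟨⟨Fin.castLE (by omega) k, w⟩, rfl⟩

theorem exists_mem_span_range_monomial {g : FreeAlgebra F (Fin d)} (hg : g ∈ freeAlgAug F d) :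
    ∃ m, g ∈ span F (Set.range (monomial F : ShortWord d m → _)) := by
  refine (mem_iSup_of_directed _ (monotone_span_range_monomial F d).directed_le).mp ?_
  refine (iSup_le fun k => ?_ : freeAlgAug F d ≤ _) hg
  rw [freeAlgGrade, span_range_pow, span_le]
  rintro _ ⟨w, rfl⟩
  exact mem_iSup_of_mem k (subset_span ⟨⟨Fin.last k, w⟩, rfl⟩)

end ShortWord

abbrev RelatorIndex (d : ℕ) (s : ℕ → ℕ) := Σ m, Sym (ShortWord d m) (s m)

variable {d : ℕ} {s : ℕ → ℕ}

def relatorDegree (j : RelatorIndex d s) : ℕ :=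
  ((j.2 : Multiset (ShortWord d j.1)).map ShortWord.length).sum

theorem relatorDegree_bounds (j : RelatorIndex d s) :
    s j.1 ≤ relatorDegree j ∧ relatorDegree j ≤ (j.1 + 1) * s j.1 := by
  have hcard : Multiset.card ((j.2 : Multiset (ShortWord d j.1)).map ShortWord.length) = s j.1 :=
    by simp
  have hlength : ∀ l ∈ (j.2 : Multiset (ShortWord d j.1)).map ShortWord.length,
      1 ≤ l ∧ l ≤ j.1 + 1 := by
    simp only [Multiset.mem_map, forall_exists_index, and_imp]
    rintro _ ⟨k, w⟩ - rfl
    exact ⟨Nat.le_add_left _ _, Nat.succ_le_succ (Nat.lt_succ_iff.mp k.2)⟩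
  constructor
  · simpa [hcard, relatorDegree] using Multiset.card_nsmul_le_sum fun l hl => (hlength l hl).1
  · simpa [hcard, relatorDegree, mul_comm] using
      Multiset.sum_le_card_nsmul _ _ fun l hl => (hlength l hl).2

theorem infinite_relatorIndex (hd : 0 < d) (s : ℕ → ℕ) : Infinite (RelatorIndex d s) :=
  Infinite.of_injective (fun m => ⟨m, Sym.replicate (s m) ⟨0, fun _ => ⟨0, hd⟩⟩⟩)
    fun _ _ h => congrArg Sigma.fst h

variable (F : Type*) [Field F]

noncomputable def relator (j : RelatorIndex d s) : FreeAlgebra F (Fin d) :=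
  symmetrizedProd (ShortWord.monomial F) j.2

theorem relator_mem_freeAlgGrade (j : RelatorIndex d s) :
    relator F j ∈ freeAlgGrade F d (relatorDegree j) :=
  symmetrizedProd_mem_pow _ _ _ (ShortWord.monomial_mem_freeAlgGrade F) _

theorem exists_pow_mem_span_relator (hs : ∀ m, 1 ≤ s m) {g : FreeAlgebra F (Fin d)}
    (hg : g ∈ freeAlgAug F d) :
    ∃ n, 1 ≤ n ∧ g ^ n ∈ span F (Set.range (relator F : RelatorIndex d s → _)) := by
  obtain ⟨m, hm⟩ := ShortWord.exists_mem_span_range_monomial F hg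
  refine ⟨s m, hs m, span_mono ?_ (pow_mem_span_symmetrizedProd _ hm _)⟩
  rintro _ ⟨M, rfl⟩
  exact ⟨⟨m, M⟩, rfl⟩

end GolodShafarevich

open GolodShafarevich

theorem golod_shafarevich_sequences_exist
    (F : Type*) [Field F] (d : ℕ) (hd : 2 ≤ d)
    (ε : ℝ) (hε : 0 < ε) (hdε : 1 < (d : ℝ) - 2 * ε) :
    ∃ (f : ℕ → FreeAlgebra F (Fin d)) (deg : ℕ → ℕ),
      (∀ j, 2 ≤ deg j ∧ f j ∈ freeAlgGrade F d (deg j)) ∧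
      (∀ g ∈ freeAlgAug F d, ∃ n : ℕ, 1 ≤ n ∧
        g ^ n ∈ Submodule.span F {x | ∃ j a b, x = a * f j * b}) ∧
      (∀ ℓ : ℕ, 2 ≤ ℓ → {j | deg j = ℓ}.Finite ∧
        ({j | deg j = ℓ}.ncard : ℝ) ≤ ε ^ 2 * ((d : ℝ) - 2 * ε) ^ (ℓ - 2)) := by
  obtain ⟨s, hs⟩ := exists_separated_seq_card_sym_le (ShortWord d) (pow_pos hε 2) hdε
  have : Infinite (RelatorIndex d s) := infinite_relatorIndex (by omega) s
  obtain ⟨e⟩ : Nonempty (RelatorIndex d s ≃ ℕ) := nonempty_equiv_of_countable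
  refine ⟨fun k => relator F (e.symm k), fun k => relatorDegree (e.symm k),
    fun k => ⟨(hs _).1.trans (relatorDegree_bounds _).1, relator_mem_freeAlgGrade F _⟩,
    fun g hg => ?_, fun ℓ _ => ?_⟩
  · obtain ⟨n, hn, hgn⟩ := exists_pow_mem_span_relator F (fun m => one_le_two.trans (hs m).1) hg
    refine ⟨n, hn, span_mono ?_ hgn⟩
    rintro _ ⟨j, rfl⟩
    exact ⟨e j, 1, 1, by simp⟩
  · have hB : Monotone fun ℓ => ε ^ 2 * ((d : ℝ) - 2 * ε) ^ (ℓ - 2) := fun a b hab =>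
      mul_le_mul_of_nonneg_left (pow_le_pow_right₀ hdε.le (by omega)) (by positivity)
    obtain ⟨hfin, hcard⟩ := Sigma.finite_and_ncard_deg_eq_le
      (fun m => Nat.le_mul_of_pos_left _ m.succ_pos) (fun m => (hs m).2.2) relatorDegree_bounds
      hB (fun m => (hs m).2.1) ℓ (by positivity)
    change (e.symm ⁻¹' {j | relatorDegree j = ℓ}).Finite ∧
      ((e.symm ⁻¹' {j | relatorDegree j = ℓ}).ncard : ℝ) ≤ _
    rw [Set.ncard_preimage_of_injective_subset_range e.symm.injective (by simp)]
    exact ⟨hfin.preimage e.symm.injective.injOn, hcard⟩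
end

section
/- Let F be a field, d ≥ 2, T = F⟨x₁,…,x_d⟩, and let f₁, f₂, … be a sequence of homogeneous polynomials of degree ≥ 2 generating a two-sided ideal I such that (1) every g ∈ T_{≥1} has some power in I, and (2) for some ε > 0 with d − 2ε > 1 the number r_ℓ of generators of degree ℓ satisfies r_ℓ ≤ ε²·(d−2ε)^{ℓ−2} for all ℓ ≥ 2. Then the quotient algebra A = T_{≥1}/I is a nil algebra that is infinite-dimensional over F. -/
open Pointwise

theorem FreeAlgebra.basisFreeMonoid_apply {R X : Type*} [CommSemiring R] (w : FreeMonoid X) :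
    FreeAlgebra.basisFreeMonoid R X w = FreeMonoid.lift (FreeAlgebra.ι R) w := by
  rw [FreeAlgebra.basisFreeMonoid, Module.Basis.map_apply, Finsupp.coe_basisSingleOne,
    LinearEquiv.trans_symm, LinearEquiv.trans_apply]
  change (FreeAlgebra.equivMonoidAlgebraFreeMonoid (R := R) (X := X)).symm
    (MonoidAlgebra.single w 1) = _
  rw [FreeAlgebra.equivMonoidAlgebraFreeMonoid, AlgEquiv.ofAlgHom_symm_apply,
    MonoidAlgebra.lift_single, one_smul]

theorem FreeMonoid.range_of_pow {α : Type*} (n : ℕ) :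
    Set.range (FreeMonoid.of : α → FreeMonoid α) ^ n = {w | w.length = n} := by
  induction n with
  | zero => ext w; simp [FreeMonoid.length_eq_zero]
  | succ n ih =>
    ext w
    rw [pow_succ', ih]
    constructor
    · rintro ⟨_, ⟨x, rfl⟩, u, hu, rfl⟩
      simp_all [FreeMonoid.length_mul, FreeMonoid.length_of, add_comm]
    · cases w with
      | one => simp [FreeMonoid.length_one]
      | of_mul x u =>
        intro hw
        refine ⟨_, ⟨x, rfl⟩, u, ?_, rfl⟩
        simp_all [FreeMonoid.length_mul, FreeMonoid.length_of, add_comm]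

theorem Submodule.span_setOf_mul_mul_eq {R A ι : Type*} [CommSemiring R] [Semiring A]
    [Algebra R A] (f : ι → A) :
    Submodule.span R {x | ∃ j a b, x = a * f j * b} = ⊤ * Submodule.span R (Set.range f) * ⊤ := by
  rw [← Submodule.span_univ, Submodule.span_mul_span, Submodule.span_mul_span]
  congr 1
  ext x
  simp only [Set.mem_ofPred_eq, Set.mem_mul, Set.mem_univ, true_and, Set.exists_range_iff]
  constructor
  · rintro ⟨j, a, b, rfl⟩
    exact ⟨_, ⟨a, j, rfl⟩, b, rfl⟩
  · rintro ⟨_, ⟨a, j, rfl⟩, b, rfl⟩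
    exact ⟨j, a, b, rfl⟩

section Finrank

variable {K V A : Type*} [Field K] [AddCommGroup V] [Module K V] [Ring A] [Algebra K A]

instance Submodule.finiteDimensional_mul (M N : Submodule K A) [FiniteDimensional K M]
    [FiniteDimensional K N] : FiniteDimensional K ↥(M * N) := by
  rw [← Submodule.mulMap_range]
  infer_instance

theorem Submodule.finrank_mul_le (M N : Submodule K A) [FiniteDimensional K M]
    [FiniteDimensional K N] :
    Module.finrank K ↥(M * N) ≤ Module.finrank K M * Module.finrank K N := by
  rw [← Submodule.mulMap_range, ← Module.finrank_tensorProduct]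
  exact LinearMap.finrank_range_le _

theorem Submodule.finrank_finset_sup_le_s16 {ι : Type*} (s : Finset ι) (N : ι → Submodule K V)
    [∀ i, FiniteDimensional K (N i)] :
    Module.finrank K ↥(s.sup N) ≤ ∑ i ∈ s, Module.finrank K (N i) := by
  classical
  induction s using Finset.induction_on with
  | empty => simp
  | insert i s hi ih =>
    have : FiniteDimensional K ↥(s.sup N) := Module.Finite.iff_fg.mpr
      (Submodule.fg_finset_sup s N fun i _ => Module.Finite.iff_fg.mp inferInstance)
    rw [Finset.sup_insert, Finset.sum_insert hi]
    exact (Submodule.finrank_add_le_finrank_add_finrank _ _).trans (Nat.add_le_add_left ih _)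

theorem Submodule.finrank_span_le_ncard {s : Set V} (hs : s.Finite) :
    Module.finrank K (Submodule.span K s) ≤ s.ncard := by
  have := hs.fintype
  rw [Set.ncard_eq_toFinset_card']
  exact finrank_span_le_card s

theorem Submodule.exists_mem_notMem_of_disjoint_inf {p q c : Submodule K V}
    (hdisj : Disjoint (p ⊓ q) c) (hsup : p ⊓ q ⊔ c = q) (hc : c ≠ ⊥) : ∃ v ∈ q, v ∉ p := by
  by_contra! h
  rw [inf_eq_right.mpr h] at hdisj hsup
  exact hc (hdisj.eq_bot_of_ge (sup_eq_left.mp hsup))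

end Finrank

section Recursion

theorem pow_sub_mul_le_of_mul_le_succ {D : ℝ} {b : ℕ → ℝ} {n : ℕ} (hD : 0 ≤ D)
    (h : ∀ k < n, D * b k ≤ b (k + 1)) {k : ℕ} (hk : k ≤ n) : D ^ (n - k) * b k ≤ b n := by
  induction n, hk using Nat.le_induction with
  | base => simp
  | succ n hkn ih =>
    calc D ^ (n + 1 - k) * b k = D * (D ^ (n - k) * b k) := by
          rw [Nat.sub_add_comm hkn, pow_succ']; ring
      _ ≤ D * b n := mul_le_mul_of_nonneg_left (ih fun m hm => h m (by omega)) hD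
      _ ≤ b (n + 1) := h n (by omega)

theorem sum_Icc_pow_sub_two_le {q : ℝ} (hq₀ : 0 ≤ q) (hq₁ : q < 1) (n : ℕ) :
    ∑ ℓ ∈ Finset.Icc 2 (n + 1), q ^ (ℓ - 2) ≤ 1 / (1 - q) := by
  rw [← Finset.Ico_add_one_right_eq_Icc, Finset.sum_Ico_eq_sum_range]
  simpa using geom_sum_Ico_le_of_lt_one (m := 0) (n := n) hq₀ hq₁

theorem mul_le_succ_of_golodShafarevich {d ε : ℝ} (hε : 0 < ε) (hdε : 0 ≤ d - 2 * ε)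
    {b r : ℕ → ℝ} (hb : ∀ n, 0 ≤ b n)
    (hr : ∀ ℓ, 2 ≤ ℓ → r ℓ ≤ ε ^ 2 * (d - 2 * ε) ^ (ℓ - 2))
    (hrec : ∀ n, d * b n ≤ b (n + 1) + ∑ ℓ ∈ Finset.Icc 2 (n + 1), r ℓ * b (n + 1 - ℓ))
    (n : ℕ) : (d - ε) * b n ≤ b (n + 1) := by
  induction n using Nat.strong_induction_on with
  | _ n ih =>
  set D := d - ε
  set q := (d - 2 * ε) / D
  have hD : 0 < D := by linarith
  have hq₀ : 0 ≤ q := by positivity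
  have hq₁ : q < 1 := by rw [div_lt_one hD]; linarith
  have hterm : ∀ ℓ ∈ Finset.Icc 2 (n + 1),
      r ℓ * b (n + 1 - ℓ) ≤ ε ^ 2 / D * q ^ (ℓ - 2) * b n := by
    intro ℓ hℓ
    obtain ⟨hℓ₂, hℓn⟩ := Finset.mem_Icc.mp hℓ
    have hdecay := pow_sub_mul_le_of_mul_le_succ hD.le ih (Nat.sub_le n (ℓ - 1))
    rw [show n - (n - (ℓ - 1)) = ℓ - 1 by omega, show n - (ℓ - 1) = n + 1 - ℓ by omega] at hdecay
    calc r ℓ * b (n + 1 - ℓ) ≤ ε ^ 2 * (d - 2 * ε) ^ (ℓ - 2) * b (n + 1 - ℓ) :=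
          mul_le_mul_of_nonneg_right (hr ℓ hℓ₂) (hb _)
      _ ≤ ε ^ 2 * (d - 2 * ε) ^ (ℓ - 2) * (b n / D ^ (ℓ - 1)) := by
          gcongr
          rw [le_div_iff₀ (by positivity)]
          linarith
      _ = ε ^ 2 / D * q ^ (ℓ - 2) * b n := by
          rw [div_pow, show ℓ - 1 = ℓ - 2 + 1 by omega]
          field_simp
          ring
  have hsum : ∑ ℓ ∈ Finset.Icc 2 (n + 1), r ℓ * b (n + 1 - ℓ) ≤ ε * b n :=
    calc _ ≤ ∑ ℓ ∈ Finset.Icc 2 (n + 1), ε ^ 2 / D * q ^ (ℓ - 2) * b n :=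
          Finset.sum_le_sum hterm
      _ = ε ^ 2 / D * b n * ∑ ℓ ∈ Finset.Icc 2 (n + 1), q ^ (ℓ - 2) := by
          rw [Finset.mul_sum]; exact Finset.sum_congr rfl fun _ _ => by ring
      _ ≤ ε ^ 2 / D * b n * (1 / (1 - q)) :=
          mul_le_mul_of_nonneg_left (sum_Icc_pow_sub_two_le hq₀ hq₁ n)
            (mul_nonneg (by positivity) (hb n))
      _ = ε * b n := by
          have : 1 - q = ε / D := by
            rw [eq_div_iff hD.ne', sub_mul, div_mul_cancel₀ _ hD.ne']; ring
          rw [this]; field_simp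
  linarith [hrec n]

end Recursion

section Grading

variable {F : Type*} [Field F] {d : ℕ}

variable (F d) in
noncomputable abbrev freeAlgMonomial : FreeMonoid (Fin d) →* FreeAlgebra F (Fin d) :=
  FreeMonoid.lift (FreeAlgebra.ι F)

theorem freeAlgGrade_eq_span (n : ℕ) :
    freeAlgGrade F d n = Submodule.span F (freeAlgMonomial F d '' {w | w.length = n}) := by
  rw [freeAlgGrade, Submodule.span_pow, ← FreeMonoid.range_of_pow, Set.image_pow,
    ← Set.range_comp, FreeMonoid.lift_comp_of]

theorem freeAlgMonomial_mem_freeAlgGrade (w : FreeMonoid (Fin d)) :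
    freeAlgMonomial F d w ∈ freeAlgGrade F d w.length := by
  rw [freeAlgGrade_eq_span]
  exact Submodule.subset_span ⟨w, rfl, rfl⟩

theorem freeAlgGrade_mul_freeAlgGrade (m n : ℕ) :
    freeAlgGrade F d m * freeAlgGrade F d n = freeAlgGrade F d (m + n) :=
  (pow_add _ m n).symm

theorem freeAlgGrade_one : freeAlgGrade F d 1 =
    Submodule.span F (Set.range (FreeAlgebra.ι F : Fin d → FreeAlgebra F (Fin d))) :=
  pow_one _

theorem freeAlgGrade_eq_span_range_vector (n : ℕ) :
    freeAlgGrade F d n = Submodule.span F (Set.range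
      fun v : List.Vector (Fin d) n => FreeAlgebra.basisFreeMonoid F (Fin d) v.toList) := by
  rw [freeAlgGrade_eq_span]
  congr 1
  ext x
  constructor
  · rintro ⟨w, hw, rfl⟩
    exact ⟨⟨w.toList, hw⟩, FreeAlgebra.basisFreeMonoid_apply _⟩
  · rintro ⟨v, rfl⟩
    exact ⟨FreeMonoid.ofList v.toList, v.2, (FreeAlgebra.basisFreeMonoid_apply _).symm⟩

instance (n : ℕ) : FiniteDimensional F (freeAlgGrade F d n) := by
  rw [freeAlgGrade_eq_span_range_vector]
  exact FiniteDimensional.span_of_finite F (Set.finite_range _)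

theorem finrank_freeAlgGrade (n : ℕ) : Module.finrank F (freeAlgGrade F d n) = d ^ n := by
  rw [freeAlgGrade_eq_span_range_vector, finrank_span_eq_card, card_vector, Fintype.card_fin]
  exact (FreeAlgebra.basisFreeMonoid F (Fin d)).linearIndependent.comp _
    fun _ _ h => List.Vector.toList_injective h

variable (F d) in
noncomputable def freeAlgGradeProj (n : ℕ) : FreeAlgebra F (Fin d) →ₗ[F] FreeAlgebra F (Fin d) :=
  (FreeAlgebra.basisFreeMonoid F (Fin d)).constr F
    fun w => if w.length = n then FreeAlgebra.basisFreeMonoid F (Fin d) w else 0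

theorem freeAlgGradeProj_freeAlgMonomial (n : ℕ) (w : FreeMonoid (Fin d)) :
    freeAlgGradeProj F d n (freeAlgMonomial F d w) =
      if w.length = n then freeAlgMonomial F d w else 0 := by
  rw [← FreeAlgebra.basisFreeMonoid_apply, freeAlgGradeProj, Module.Basis.constr_basis]

theorem freeAlgGradeProj_of_mem {m : ℕ} {x : FreeAlgebra F (Fin d)}
    (hx : x ∈ freeAlgGrade F d m) (n : ℕ) :
    freeAlgGradeProj F d n x = if m = n then x else 0 := by
  rw [freeAlgGrade_eq_span] at hx
  induction hx using Submodule.span_induction with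
  | mem z hz =>
    obtain ⟨w, rfl, rfl⟩ := hz
    exact freeAlgGradeProj_freeAlgMonomial n w
  | zero => simp
  | add x y _ _ hx hy => rw [map_add, hx, hy]; split_ifs <;> simp
  | smul c x _ hx => rw [map_smul, hx]; split_ifs <;> simp

theorem freeAlgGradeProj_map_span_le {ι : Type*} (s : ι → FreeAlgebra F (Fin d)) (δ : ι → ℕ)
    (hs : ∀ i, s i ∈ freeAlgGrade F d (δ i)) (n : ℕ) :
    (Submodule.span F (Set.range s)).map (freeAlgGradeProj F d n) ≤
      Submodule.span F (s '' {i | δ i = n}) := by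
  rw [Submodule.map_span_le]
  rintro _ ⟨i, rfl⟩
  rw [freeAlgGradeProj_of_mem (hs i)]
  split_ifs with h
  · exact Submodule.subset_span ⟨i, h, rfl⟩
  · exact Submodule.zero_mem _

end Grading

section Ideal

variable {F ι : Type*} [Field F] {d : ℕ} {f : ι → FreeAlgebra F (Fin d)} {deg : ι → ℕ}
  {I : Submodule F (FreeAlgebra F (Fin d))}

variable (F d) in
theorem span_range_freeAlgMonomial :
    Submodule.span F (Set.range (freeAlgMonomial F d)) = ⊤ := by
  rw [← (FreeAlgebra.basisFreeMonoid F (Fin d)).span_eq]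
  congr 1
  exact congrArg Set.range (funext fun w => (FreeAlgebra.basisFreeMonoid_apply w).symm)

variable (f) in
noncomputable def relatorMultiple (i : FreeMonoid (Fin d) × ι × FreeMonoid (Fin d)) :
    FreeAlgebra F (Fin d) :=
  freeAlgMonomial F d i.1 * f i.2.1 * freeAlgMonomial F d i.2.2

variable (f) in
theorem top_mul_span_mul_top_eq_span_relatorMultiple :
    ⊤ * Submodule.span F (Set.range f) * ⊤ = Submodule.span F (Set.range (relatorMultiple f)) := by
  rw [← span_range_freeAlgMonomial, Submodule.span_mul_span, Submodule.span_mul_span]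
  congr 1
  ext x
  simp only [Set.mem_mul, Set.mem_range, Prod.exists]
  constructor
  · rintro ⟨_, ⟨_, ⟨w, rfl⟩, _, ⟨j, rfl⟩, rfl⟩, _, ⟨u, rfl⟩, rfl⟩
    exact ⟨w, j, u, rfl⟩
  · rintro ⟨w, j, u, rfl⟩
    exact ⟨_, ⟨_, ⟨w, rfl⟩, _, ⟨j, rfl⟩, rfl⟩, _, ⟨u, rfl⟩, rfl⟩

theorem relatorMultiple_mem_freeAlgGrade (hhom : ∀ j, f j ∈ freeAlgGrade F d (deg j))
    (i : FreeMonoid (Fin d) × ι × FreeMonoid (Fin d)) :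
    relatorMultiple f i ∈ freeAlgGrade F d (i.1.length + deg i.2.1 + i.2.2.length) := by
  rw [← freeAlgGrade_mul_freeAlgGrade, ← freeAlgGrade_mul_freeAlgGrade]
  exact Submodule.mul_mem_mul (Submodule.mul_mem_mul (freeAlgMonomial_mem_freeAlgGrade _)
    (hhom _)) (freeAlgMonomial_mem_freeAlgGrade _)

theorem freeAlgGradeProj_mem_span_relatorMultiple
    (hI : I = ⊤ * Submodule.span F (Set.range f) * ⊤)
    (hhom : ∀ j, f j ∈ freeAlgGrade F d (deg j)) {x : FreeAlgebra F (Fin d)} (hx : x ∈ I)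
    (n : ℕ) : freeAlgGradeProj F d n x ∈ Submodule.span F
      (relatorMultiple f '' {i | i.1.length + deg i.2.1 + i.2.2.length = n}) := by
  rw [hI, top_mul_span_mul_top_eq_span_relatorMultiple] at hx
  exact freeAlgGradeProj_map_span_le (relatorMultiple f) _
    (relatorMultiple_mem_freeAlgGrade hhom) n ⟨x, hx, rfl⟩

theorem span_relatorMultiple_le (hI : I = ⊤ * Submodule.span F (Set.range f) * ⊤) (n : ℕ) :
    Submodule.span F (relatorMultiple f '' {i | i.1.length + deg i.2.1 + i.2.2.length = n}) ≤
      I := by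
  rw [hI, top_mul_span_mul_top_eq_span_relatorMultiple]
  exact Submodule.span_mono (Set.image_subset_range _ _)

theorem freeAlgGradeProj_mem_of_mem (hI : I = ⊤ * Submodule.span F (Set.range f) * ⊤)
    (hhom : ∀ j, f j ∈ freeAlgGrade F d (deg j)) {x : FreeAlgebra F (Fin d)} (hx : x ∈ I)
    (n : ℕ) : freeAlgGradeProj F d n x ∈ I :=
  span_relatorMultiple_le hI n (freeAlgGradeProj_mem_span_relatorMultiple hI hhom hx n)

theorem inf_freeAlgGrade_eq_span_relatorMultiple
    (hI : I = ⊤ * Submodule.span F (Set.range f) * ⊤)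
    (hhom : ∀ j, f j ∈ freeAlgGrade F d (deg j)) (n : ℕ) :
    I ⊓ freeAlgGrade F d n =
      Submodule.span F (relatorMultiple f '' {i | i.1.length + deg i.2.1 + i.2.2.length = n}) := by
  refine le_antisymm (fun x ⟨hxI, hxn⟩ => ?_) (le_inf (span_relatorMultiple_le hI n) ?_)
  · rw [Submodule.span_le]
    rintro _ ⟨i, hi, rfl⟩
    exact hi ▸ relatorMultiple_mem_freeAlgGrade hhom i
  · have := freeAlgGradeProj_mem_span_relatorMultiple hI hhom hxI n
    rwa [freeAlgGradeProj_of_mem hxn, if_pos rfl] at this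

theorem inf_freeAlgGrade_eq_bot_of_lt_deg (hI : I = ⊤ * Submodule.span F (Set.range f) * ⊤)
    (hhom : ∀ j, f j ∈ freeAlgGrade F d (deg j)) {n : ℕ} (hn : ∀ j, n < deg j) :
    I ⊓ freeAlgGrade F d n = ⊥ := by
  rw [inf_freeAlgGrade_eq_span_relatorMultiple hI hhom, Submodule.span_eq_bot]
  rintro _ ⟨i, hi, rfl⟩
  have := hn i.2.1
  simp only [Set.mem_ofPred_eq] at hi
  omega

theorem freeAlgGrade_mul_inf_le (hI : I = ⊤ * Submodule.span F (Set.range f) * ⊤) (k m : ℕ) :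
    freeAlgGrade F d k * (I ⊓ freeAlgGrade F d m) ≤ I ⊓ freeAlgGrade F d (k + m) := by
  refine le_inf ?_ ((mul_le_mul_right inf_le_right _).trans_eq (freeAlgGrade_mul_freeAlgGrade k m))
  subst hI
  calc _ ≤ ⊤ * (⊤ * Submodule.span F (Set.range f) * ⊤) := mul_le_mul' le_top inf_le_left
    _ = ⊤ * ⊤ * Submodule.span F (Set.range f) * ⊤ := by rw [mul_assoc, mul_assoc, mul_assoc]
    _ ≤ _ := mul_le_mul_left (mul_le_mul_left le_top _) _

theorem span_image_mul_inf_le (hI : I = ⊤ * Submodule.span F (Set.range f) * ⊤)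
    (hhom : ∀ j, f j ∈ freeAlgGrade F d (deg j)) {ℓ : ℕ} (hℓ : 1 ≤ ℓ) (m : ℕ) :
    Submodule.span F (f '' {j | deg j = ℓ}) * (I ⊓ freeAlgGrade F d m) ≤
      freeAlgGrade F d 1 * (I ⊓ freeAlgGrade F d (ℓ - 1 + m)) := by
  have hR : Submodule.span F (f '' {j | deg j = ℓ}) ≤
      freeAlgGrade F d 1 * freeAlgGrade F d (ℓ - 1) := by
    rw [freeAlgGrade_mul_freeAlgGrade, Nat.add_sub_cancel' hℓ, Submodule.span_le]
    rintro _ ⟨j, hj, rfl⟩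
    exact hj ▸ hhom j
  calc _ ≤ freeAlgGrade F d 1 * freeAlgGrade F d (ℓ - 1) * (I ⊓ freeAlgGrade F d m) :=
        mul_le_mul_left hR _
    _ ≤ _ := by
        rw [mul_assoc]
        exact mul_le_mul_right (freeAlgGrade_mul_inf_le hI _ _) _

end Ideal

section DimensionCount

variable {F ι : Type*} [Field F] {d : ℕ} {f : ι → FreeAlgebra F (Fin d)} {deg : ι → ℕ}
  {I : Submodule F (FreeAlgebra F (Fin d))}

theorem inf_freeAlgGrade_succ_le (hI : I = ⊤ * Submodule.span F (Set.range f) * ⊤)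
    (hdeg : ∀ j, 2 ≤ deg j) (hhom : ∀ j, f j ∈ freeAlgGrade F d (deg j))
    (C : ℕ → Submodule F (FreeAlgebra F (Fin d)))
    (hC : ∀ m, I ⊓ freeAlgGrade F d m ⊔ C m = freeAlgGrade F d m) (n : ℕ) :
    I ⊓ freeAlgGrade F d (n + 1) ≤ freeAlgGrade F d 1 * (I ⊓ freeAlgGrade F d n) ⊔
      (Finset.Icc 2 (n + 1)).sup fun ℓ =>
        Submodule.span F (f '' {j | deg j = ℓ}) * C (n + 1 - ℓ) := by
  rw [inf_freeAlgGrade_eq_span_relatorMultiple hI hhom, Submodule.span_le]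
  rintro _ ⟨⟨w, j, u⟩, hi, rfl⟩
  simp only [Set.mem_ofPred_eq] at hi
  cases w with
  | of_mul x w =>
    have hw : relatorMultiple f (.of x * w, j, u) =
        FreeAlgebra.ι F x * relatorMultiple f (w, j, u) := by
      simp [relatorMultiple, mul_assoc]
    rw [SetLike.mem_coe, hw]
    refine Submodule.mem_sup_left (Submodule.mul_mem_mul ?_ ?_)
    · rw [freeAlgGrade_one]
      exact Submodule.subset_span ⟨x, rfl⟩
    · rw [inf_freeAlgGrade_eq_span_relatorMultiple hI hhom]
      refine Submodule.subset_span ⟨(w, j, u), ?_, rfl⟩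
      simp only [Set.mem_ofPred_eq, FreeMonoid.length_mul, FreeMonoid.length_of] at hi ⊢
      omega
  | one =>
    simp only [FreeMonoid.length_one, zero_add] at hi
    have hj := hdeg j
    have hmem : relatorMultiple f (1, j, u) ∈ Submodule.span F (f '' {j' | deg j' = deg j}) *
        (I ⊓ freeAlgGrade F d u.length ⊔ C u.length) := by
      rw [hC]
      simpa [relatorMultiple] using Submodule.mul_mem_mul
        (Submodule.subset_span (s := f '' {j' | deg j' = deg j}) ⟨j, rfl, rfl⟩)
        (freeAlgMonomial_mem_freeAlgGrade u)
    rw [Submodule.mul_sup] at hmem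
    refine SetLike.le_def.mp (sup_le_sup ?_ ?_) hmem
    · refine (span_image_mul_inf_le hI hhom (by omega) _).trans_eq ?_
      congr 3
      omega
    · rw [show u.length = n + 1 - deg j by omega]
      exact Finset.le_sup (f := fun ℓ => Submodule.span F (f '' {j | deg j = ℓ}) * C (n + 1 - ℓ))
        (Finset.mem_Icc.mpr ⟨hj, by omega⟩)

theorem finrank_inf_freeAlgGrade_succ_le (hI : I = ⊤ * Submodule.span F (Set.range f) * ⊤)
    (hdeg : ∀ j, 2 ≤ deg j) (hhom : ∀ j, f j ∈ freeAlgGrade F d (deg j))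
    (hfin : ∀ ℓ, {j | deg j = ℓ}.Finite) (C : ℕ → Submodule F (FreeAlgebra F (Fin d)))
    (hC : ∀ m, I ⊓ freeAlgGrade F d m ⊔ C m = freeAlgGrade F d m) (n : ℕ) :
    Module.finrank F ↥(I ⊓ freeAlgGrade F d (n + 1)) ≤
      d * Module.finrank F ↥(I ⊓ freeAlgGrade F d n) +
        ∑ ℓ ∈ Finset.Icc 2 (n + 1), {j | deg j = ℓ}.ncard * Module.finrank F (C (n + 1 - ℓ)) := by
  have (ℓ : ℕ) : FiniteDimensional F (Submodule.span F (f '' {j | deg j = ℓ})) :=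
    Submodule.finiteDimensional_of_le
      (Submodule.span_le.mpr fun _ ⟨j, hj, hx⟩ => hx ▸ hj ▸ hhom j)
  have (m : ℕ) : FiniteDimensional F (C m) :=
    Submodule.finiteDimensional_of_le (le_sup_right.trans_eq (hC m))
  have hfinrank_span (ℓ : ℕ) :
      Module.finrank F (Submodule.span F (f '' {j | deg j = ℓ})) ≤ {j | deg j = ℓ}.ncard :=
    (Submodule.finrank_span_le_ncard ((hfin ℓ).image f)).trans (Set.ncard_image_le (hfin ℓ))
  calc _ ≤ _ := Submodule.finrank_mono (inf_freeAlgGrade_succ_le hI hdeg hhom C hC n)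
    _ ≤ _ := Submodule.finrank_add_le_finrank_add_finrank _ _
    _ ≤ _ := by
      gcongr
      · calc _ ≤ _ := Submodule.finrank_mul_le _ _
          _ = _ := by rw [finrank_freeAlgGrade, pow_one]
      · refine (Submodule.finrank_finset_sup_le_s16 _ _).trans (Finset.sum_le_sum fun ℓ _ => ?_)
        exact (Submodule.finrank_mul_le _ _).trans (Nat.mul_le_mul_right _ (hfinrank_span ℓ))

theorem mul_finrank_le_finrank_succ_add (hI : I = ⊤ * Submodule.span F (Set.range f) * ⊤)
    (hdeg : ∀ j, 2 ≤ deg j) (hhom : ∀ j, f j ∈ freeAlgGrade F d (deg j))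
    (hfin : ∀ ℓ, {j | deg j = ℓ}.Finite) (C : ℕ → Submodule F (FreeAlgebra F (Fin d)))
    (hCdisj : ∀ m, Disjoint (I ⊓ freeAlgGrade F d m) (C m))
    (hC : ∀ m, I ⊓ freeAlgGrade F d m ⊔ C m = freeAlgGrade F d m) (n : ℕ) :
    (d : ℝ) * Module.finrank F (C n) ≤ Module.finrank F (C (n + 1)) +
      ∑ ℓ ∈ Finset.Icc 2 (n + 1),
        ({j | deg j = ℓ}.ncard : ℝ) * Module.finrank F (C (n + 1 - ℓ)) := by
  have hsplit (m : ℕ) : Module.finrank F ↥(I ⊓ freeAlgGrade F d m) + Module.finrank F (C m) =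
      (d : ℝ) ^ m := by
    have : FiniteDimensional F (C m) :=
      Submodule.finiteDimensional_of_le (le_sup_right.trans_eq (hC m))
    have := Submodule.finrank_sup_add_finrank_inf_eq (I ⊓ freeAlgGrade F d m) (C m)
    rw [hC, (hCdisj m).eq_bot, finrank_bot, finrank_freeAlgGrade] at this
    exact_mod_cast this.symm
  have hcount : (Module.finrank F ↥(I ⊓ freeAlgGrade F d (n + 1)) : ℝ) ≤
      d * Module.finrank F ↥(I ⊓ freeAlgGrade F d n) + ∑ ℓ ∈ Finset.Icc 2 (n + 1),
        ({j | deg j = ℓ}.ncard : ℝ) * Module.finrank F (C (n + 1 - ℓ)) := by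
    exact_mod_cast finrank_inf_freeAlgGrade_succ_le hI hdeg hhom hfin C hC n
  have := hsplit n
  have := hsplit (n + 1)
  rw [pow_succ] at this
  nlinarith

end DimensionCount

section Quotient

variable {F ι : Type*} [Field F] {d : ℕ} {I : Submodule F (FreeAlgebra F (Fin d))}

theorem linearIndependent_mkQ_of_mem_freeAlgGrade
    (hI : ∀ n x, x ∈ I → freeAlgGradeProj F d n x ∈ I) {v : ι → FreeAlgebra F (Fin d)}
    {δ : ι → ℕ} (hδ : Function.Injective δ) (hv : ∀ i, v i ∈ freeAlgGrade F d (δ i))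
    (hvI : ∀ i, v i ∉ I) : LinearIndependent F (I.mkQ ∘ v) := by
  classical
  rw [linearIndependent_iff']
  intro s g hg i hi
  have hsum : ∑ k ∈ s, g k • v k ∈ I := by
    rw [← Submodule.Quotient.mk_eq_zero, ← Submodule.mkQ_apply, map_sum]
    simpa only [map_smul, Function.comp_apply] using hg
  have hproj := hI (δ i) _ hsum
  rw [map_sum, Finset.sum_eq_single i (fun k _ hki => ?_) (absurd hi), map_smul,
    freeAlgGradeProj_of_mem (hv i), if_pos rfl] at hproj
  · by_contra hgi
    exact hvI i ((Submodule.smul_mem_iff I hgi).mp hproj)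
  · rw [map_smul, freeAlgGradeProj_of_mem (hv k), if_neg (hδ.ne hki), smul_zero]

theorem not_finite_quotient_of_forall_exists_notMem
    (hI : ∀ n x, x ∈ I → freeAlgGradeProj F d n x ∈ I)
    (h : ∀ n, ∃ v ∈ freeAlgGrade F d (n + 1), v ∉ I) :
    ¬ Module.Finite F (↥(freeAlgAug F d) ⧸ I.comap (freeAlgAug F d).subtype) := by
  intro hfin
  choose v hv hvI using h
  have hvaug (n : ℕ) : v n ∈ freeAlgAug F d :=
    le_iSup (fun k => freeAlgGrade F d (k + 1)) n (hv n)
  refine Module.Finite.not_linearIndependent_of_infinite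
    (fun n => (I.comap (freeAlgAug F d).subtype).mkQ ⟨v n, hvaug n⟩) (LinearIndependent.of_comp
      ((I.comap (freeAlgAug F d).subtype).mapQ I (freeAlgAug F d).subtype le_rfl) ?_)
  exact linearIndependent_mkQ_of_mem_freeAlgGrade hI (add_left_injective 1) hv hvI

end Quotient

theorem golod_shafarevich_quotient_nil_infinite_general
    (F : Type*) [Field F] (d : ℕ)
    (f : ℕ → FreeAlgebra F (Fin d)) (deg : ℕ → ℕ)
    (hdeg : ∀ j, 2 ≤ deg j)
    (hhom : ∀ j, f j ∈ freeAlgGrade F d (deg j))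
    (I : Submodule F (FreeAlgebra F (Fin d)))
    (hI : I = Submodule.span F {x | ∃ j a b, x = a * f j * b})
    (hnil : ∀ g ∈ freeAlgAug F d, ∃ n : ℕ, 1 ≤ n ∧ g ^ n ∈ I)
    (ε : ℝ) (hε : 0 < ε) (hdε : 1 < (d : ℝ) - 2 * ε)
    (r : ℕ → ℕ)
    (hrcount : ∀ ℓ, {j | deg j = ℓ}.Finite ∧ {j | deg j = ℓ}.ncard = r ℓ)
    (hrbound : ∀ ℓ : ℕ, 2 ≤ ℓ → (r ℓ : ℝ) ≤ ε ^ 2 * ((d : ℝ) - 2 * ε) ^ (ℓ - 2)) :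
    (∀ g ∈ freeAlgAug F d, ∃ n : ℕ, 1 ≤ n ∧ g ^ n ∈ I) ∧
    ¬ Module.Finite F
        (↥(freeAlgAug F d) ⧸ (I.comap (freeAlgAug F d).subtype)) := by
  refine ⟨hnil, ?_⟩
  rw [Submodule.span_setOf_mul_mul_eq] at hI
  choose C hCdisj hC using fun n =>
    IsModularLattice.exists_disjoint_and_sup_eq (inf_le_right : I ⊓ freeAlgGrade F d n ≤ _)
  have hrec := mul_finrank_le_finrank_succ_add hI hdeg hhom (fun ℓ => (hrcount ℓ).1) C hCdisj hC
  simp only [fun ℓ => (hrcount ℓ).2] at hrec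
  have hstep := mul_le_succ_of_golodShafarevich hε (by linarith) (fun n => Nat.cast_nonneg _)
    hrbound hrec
  have hC0 : Module.finrank F (C 0) = 1 := by
    have h0 := hC 0
    rw [inf_freeAlgGrade_eq_bot_of_lt_deg hI hhom (fun j => by have := hdeg j; omega),
      bot_sup_eq] at h0
    rw [h0, finrank_freeAlgGrade, pow_zero]
  refine not_finite_quotient_of_forall_exists_notMem
    (fun n _ hx => freeAlgGradeProj_mem_of_mem hI hhom hx n) fun n => ?_
  refine Submodule.exists_mem_notMem_of_disjoint_inf (hCdisj (n + 1)) (hC (n + 1)) fun h => ?_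
  have hgrowth := pow_sub_mul_le_of_mul_le_succ (by linarith) (fun k _ => hstep k)
    (Nat.zero_le (n + 1))
  rw [h, finrank_bot, hC0, Nat.sub_zero, Nat.cast_one, mul_one, Nat.cast_zero] at hgrowth
  exact hgrowth.not_gt (pow_pos (by linarith) _)

theorem golod_shafarevich_quotient_nil_infinite
    (F : Type*) [Field F] (d : ℕ) (hd : 2 ≤ d)
    (f : ℕ → FreeAlgebra F (Fin d)) (deg : ℕ → ℕ)
    (hdeg : ∀ j, 2 ≤ deg j)
    (hhom : ∀ j, f j ∈ freeAlgGrade F d (deg j))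
    (I : Submodule F (FreeAlgebra F (Fin d)))
    (hI : I = Submodule.span F {x | ∃ j a b, x = a * f j * b})
    (hnil : ∀ g ∈ freeAlgAug F d, ∃ n : ℕ, 1 ≤ n ∧ g ^ n ∈ I)
    (ε : ℝ) (hε : 0 < ε) (hdε : 1 < (d : ℝ) - 2 * ε)
    (r : ℕ → ℕ)
    (hrcount : ∀ ℓ, {j | deg j = ℓ}.Finite ∧ {j | deg j = ℓ}.ncard = r ℓ)
    (hrbound : ∀ ℓ : ℕ, 2 ≤ ℓ → (r ℓ : ℝ) ≤ ε ^ 2 * ((d : ℝ) - 2 * ε) ^ (ℓ - 2)) :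
    (∀ g ∈ freeAlgAug F d, ∃ n : ℕ, 1 ≤ n ∧ g ^ n ∈ I) ∧
    ¬ Module.Finite F
        (↥(freeAlgAug F d) ⧸ (I.comap (freeAlgAug F d).subtype)) :=
  golod_shafarevich_quotient_nil_infinite_general F d f deg hdeg hhom I hI hnil ε hε hdε r hrcount
    hrbound
end

section
/- Let F be a field, d ≥ 2, T = F⟨x₁,…,x_d⟩ graded by degree, R ⊆ T_{≥2} a graded subspace with R_k its homogeneous degree-k component and dim R_k ≤ r_k, I = TRT, and B a graded complement of I. Then for every n ≥ 2, I_n = I_{n−1}·T₁ + Σ_{k=2}^n B_{n−k}·R_k, and consequently dim I_n ≤ d·dim I_{n−1} + Σ_{j=0}^{n−2} b_j·r_{n−j}, where b_j = dim B_j. -/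
/-!
Write `T_n = V ^ n` for the span `V` of the generators. The ideal `I = T R T` is spanned by the
pieces `T_a R_k T_b` with `k ≥ 2`, each homogeneous of degree `a + k + b`. A piece with `b ≥ 1`
lies in `I_{a+k+b-1} T_1`. A piece with `b = 0` lies in `(I_a + B_a) R_k`, because `I` and `B`
are graded and complementary, and `I_a R_k ⊆ I_{a+k-1} T_1` since `R_k ⊆ T_{k-1} T_1`. As the
components `T_n` are independent, the degree-`n` part of a sum of homogeneous pieces is the sum
of its pieces of degree `n`, which gives the decomposition of `I_n`. The dimension bound follows
because a product `M * N` of subspaces is the image of `M ⊗ N`.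
-/

open Submodule Module

namespace iSupIndep

variable {α : Type*} [CompleteLattice α]

section Modular

variable [IsModularLattice α] {ι : Type*} {t : ι → α}

theorem iSup_inf_eq_of_le (ht : iSupIndep t) {c : ι → α} (hc : ∀ i, c i ≤ t i) (i : ι) :
    (⨆ j, c j) ⊓ t i = c i := by
  refine le_antisymm ?_ (le_inf (le_iSup c i) (hc i))
  have hsplit : ⨆ j, c j ≤ c i ⊔ ⨆ (j) (_ : j ≠ i), t j :=
    iSup_le fun j => by
      rcases eq_or_ne j i with rfl | hj
      · exact le_sup_left
      · exact le_sup_of_le_right ((hc j).trans (le_iSup₂_of_le j hj le_rfl))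
  calc (⨆ j, c j) ⊓ t i ≤ (c i ⊔ ⨆ (j) (_ : j ≠ i), t j) ⊓ t i := inf_le_inf_right _ hsplit
    _ = c i := by rw [sup_inf_assoc_of_le _ (hc i), inf_comm, (ht i).eq_bot, sup_bot_eq]

theorem inf_le_of_le_iSup_inf (ht : iSupIndep t) {a : α} {c : ι → α}
    (ha : a ≤ ⨆ j, c j ⊓ t j) (i : ι) : a ⊓ t i ≤ c i :=
  (inf_le_inf_right _ ha).trans
    ((ht.iSup_inf_eq_of_le (fun _ => inf_le_right) i).trans_le inf_le_left)

theorem sup_inf_eq_of_eq_iSup_inf (ht : iSupIndep t) {a b : α} (ha : a = ⨆ j, a ⊓ t j)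
    (hb : b = ⨆ j, b ⊓ t j) (i : ι) : (a ⊔ b) ⊓ t i = a ⊓ t i ⊔ b ⊓ t i := by
  have hab : a ⊔ b = ⨆ j, (a ⊓ t j ⊔ b ⊓ t j) := by
    conv_lhs => rw [ha, hb]
    exact iSup_sup_eq.symm
  rw [hab]
  exact ht.iSup_inf_eq_of_le (fun _ => sup_le inf_le_right inf_le_right) i

end Modular

theorem eq_iSup_inf_add_two {t : ℕ → α} (ht : iSupIndep t) {a : α} (ha : a ≤ ⨆ k, t (k + 2))
    (hgr : a = ⨆ k, a ⊓ t k) : a = ⨆ k, a ⊓ t (k + 2) := by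
  refine le_antisymm ?_ (iSup_le fun k => inf_le_left)
  conv_lhs => rw [hgr]
  refine iSup_le fun k => ?_
  rcases lt_or_ge k 2 with hk | hk
  · have ha' : a ≤ ⨆ i ∈ {i | 2 ≤ i}, t i :=
      ha.trans (iSup_le fun j => le_iSup₂_of_le (j + 2) (by simp) le_rfl)
    have hdisj : Disjoint a (t k) :=
      (ht.disjoint_biSup (y := {i | 2 ≤ i}) (by simpa using hk)).symm.mono_left ha'
    exact hdisj.eq_bot.trans_le bot_le
  · obtain ⟨j, rfl⟩ : ∃ j, k = j + 2 := ⟨k - 2, by omega⟩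
    exact le_iSup (fun j => a ⊓ t (j + 2)) j

end iSupIndep

namespace Submodule

section Algebra

variable {F A : Type*} [Field F] [Ring A] [Algebra F A]

instance finiteDimensional_mul_s18 (M N : Submodule F A) [FiniteDimensional F M]
    [FiniteDimensional F N] : FiniteDimensional F ↥(M * N) :=
  Module.Finite.iff_fg.mpr ((Module.Finite.iff_fg.mp ‹_›).mul (Module.Finite.iff_fg.mp ‹_›))

instance finiteDimensional_pow (M : Submodule F A) [FiniteDimensional F M] (n : ℕ) :
    FiniteDimensional F ↥(M ^ n) :=
  Module.Finite.iff_fg.mpr ((Module.Finite.iff_fg.mp ‹_›).pow n)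

theorem finrank_mul_le_s18 (M N : Submodule F A) [FiniteDimensional F M] [FiniteDimensional F N] :
    finrank F ↥(M * N) ≤ finrank F M * finrank F N := by
  rw [← mulMap_range, ← finrank_tensorProduct]
  exact LinearMap.finrank_range_le _

end Algebra

variable {K V ι : Type*} [DivisionRing K] [AddCommGroup V] [Module K V]

instance finiteDimensional_finsetSum (s : Finset ι) (f : ι → Submodule K V)
    [∀ i, FiniteDimensional K (f i)] : FiniteDimensional K ↥(∑ i ∈ s, f i) :=
  Module.Finite.iff_fg.mpr <| Finset.sum_induction _ FG (fun _ _ => FG.sup) fg_bot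
    fun _ _ => Module.Finite.iff_fg.mp inferInstance

theorem finrank_finsetSum_le (s : Finset ι) (f : ι → Submodule K V)
    [∀ i, FiniteDimensional K (f i)] :
    finrank K ↥(∑ i ∈ s, f i) ≤ ∑ i ∈ s, finrank K (f i) := by
  classical
  induction s using Finset.induction_on with
  | empty => rw [Finset.sum_empty, Finset.sum_empty, zero_eq_bot, finrank_bot]
  | insert i s hi ih =>
    rw [Finset.sum_insert hi, Finset.sum_insert hi]
    exact (finrank_add_le_finrank_add_finrank _ _).trans (add_le_add_right ih _)

end Submodule

section PowersOfSubspace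

variable {F A : Type*} [Field F] [Ring A] [Algebra F A] {V : Submodule F A}

theorem pow_mul_inf_mul_pow_le (R : Submodule F A) (a k b : ℕ) :
    V ^ a * (R ⊓ V ^ k) * V ^ b ≤ V ^ (a + k + b) := by
  rw [pow_add, pow_add]
  gcongr
  exact inf_le_right

theorem top_mul_mul_top_le_iSup_inf_pow (hVtop : ⨆ n, V ^ n = ⊤) {R : Submodule F A}
    (hR : R = ⨆ k, R ⊓ V ^ (k + 2)) {C : ℕ → Submodule F A}
    (hC : ∀ a k b, V ^ a * (R ⊓ V ^ (k + 2)) * V ^ b ≤ C (a + (k + 2) + b)) :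
    ⊤ * R * ⊤ ≤ ⨆ m, C m ⊓ V ^ m := by
  rw [← hVtop, hR]
  simp only [iSup_mul, mul_iSup]
  refine iSup_le fun b => iSup_le fun k => iSup_le fun a => ?_
  exact le_iSup_of_le (a + (k + 2) + b) (le_inf (hC a k b) (pow_mul_inf_mul_pow_le R a _ b))

theorem mul_le_top_mul_mul_top {R P : Submodule F A} (h : P ≤ ⊤ * R * ⊤) (Q : Submodule F A) :
    P * Q ≤ ⊤ * R * ⊤ :=
  calc P * Q ≤ ⊤ * R * ⊤ * ⊤ := mul_le_mul' h le_top
    _ ≤ ⊤ * R * ⊤ := by rw [mul_assoc _ ⊤ ⊤]; exact mul_le_mul' le_rfl le_top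

theorem mul_le_top_mul_mul_top_of_le {R Q : Submodule F A} (h : Q ≤ R) (P : Submodule F A) :
    P * Q ≤ ⊤ * R * ⊤ :=
  calc P * Q = P * Q * 1 := (mul_one _).symm
    _ ≤ ⊤ * R * ⊤ := mul_le_mul' (mul_le_mul' le_top h) le_top

variable (V) in
noncomputable def golodSpan (I B R : Submodule F A) (n : ℕ) : Submodule F A :=
  (I ⊓ V ^ (n - 1)) * V ^ 1 ⊔ ∑ k ∈ Finset.Icc 2 n, (B ⊓ V ^ (n - k)) * (R ⊓ V ^ k)

theorem finrank_golodSpan_le [FiniteDimensional F V] (I B R : Submodule F A) (n : ℕ) :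
    finrank F ↥(golodSpan V I B R n) ≤ finrank F ↥(I ⊓ V ^ (n - 1)) * finrank F ↥(V ^ 1) +
      ∑ k ∈ Finset.Icc 2 n, finrank F ↥(B ⊓ V ^ (n - k)) * finrank F ↥(R ⊓ V ^ k) := by
  refine (finrank_add_le_finrank_add_finrank _ _).trans (add_le_add (finrank_mul_le_s18 _ _) ?_)
  exact (finrank_finsetSum_le _ _).trans (Finset.sum_le_sum fun k _ => finrank_mul_le_s18 _ _)

variable {I B R : Submodule F A}

theorem golodSpan_le_inf_pow (hI : I = ⊤ * R * ⊤) {n : ℕ} (hn : 1 ≤ n) :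
    golodSpan V I B R n ≤ I ⊓ V ^ n := by
  refine sup_le (le_inf ?_ ?_) (Finset.sum_induction _ (· ≤ I ⊓ V ^ n)
    (fun _ _ => sup_le) bot_le fun k hk => le_inf ?_ ?_)
  · exact hI ▸ mul_le_top_mul_mul_top (hI ▸ inf_le_left) _
  · calc (I ⊓ V ^ (n - 1)) * V ^ 1 ≤ V ^ (n - 1) * V ^ 1 := mul_le_mul' inf_le_right le_rfl
      _ = V ^ n := by rw [← pow_add, Nat.sub_add_cancel hn]
  · exact hI ▸ mul_le_top_mul_mul_top_of_le inf_le_left _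
  · calc (B ⊓ V ^ (n - k)) * (R ⊓ V ^ k) ≤ V ^ (n - k) * V ^ k :=
          mul_le_mul' inf_le_right inf_le_right
      _ = V ^ n := by rw [← pow_add, Nat.sub_add_cancel (Finset.mem_Icc.mp hk).2]

theorem pow_mul_inf_le_golodSpan (hI : I = ⊤ * R * ⊤) {a : ℕ}
    (hsplit : V ^ a ≤ I ⊓ V ^ a ⊔ B ⊓ V ^ a) (k : ℕ) :
    V ^ a * (R ⊓ V ^ (k + 2)) ≤ golodSpan V I B R (a + (k + 2)) := by
  have hIpart : (I ⊓ V ^ a) * (R ⊓ V ^ (k + 2)) ≤ (I ⊓ V ^ (a + (k + 1))) * V ^ 1 :=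
    calc (I ⊓ V ^ a) * (R ⊓ V ^ (k + 2)) ≤ (I ⊓ V ^ a) * (V ^ (k + 1) * V ^ 1) :=
          mul_le_mul' le_rfl (inf_le_right.trans (pow_add V (k + 1) 1).le)
      _ ≤ (I ⊓ V ^ (a + (k + 1))) * V ^ 1 := by
          rw [← mul_assoc, pow_add V a (k + 1)]
          refine mul_le_mul' (le_inf ?_ (mul_le_mul' inf_le_right le_rfl)) le_rfl
          exact hI ▸ mul_le_top_mul_mul_top (hI ▸ inf_le_left) _
  have hBpart : (B ⊓ V ^ a) * (R ⊓ V ^ (k + 2)) ≤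
      ∑ j ∈ Finset.Icc 2 (a + (k + 2)), (B ⊓ V ^ (a + (k + 2) - j)) * (R ⊓ V ^ j) := by
    simpa only [Nat.add_sub_cancel] using Finset.single_le_sum_of_canonicallyOrdered
      (f := fun j => (B ⊓ V ^ (a + (k + 2) - j)) * (R ⊓ V ^ j))
      (Finset.mem_Icc.mpr ⟨by omega, by omega⟩ : k + 2 ∈ Finset.Icc 2 (a + (k + 2)))
  have hdeg : a + (k + 2) - 1 = a + (k + 1) := by omega
  calc V ^ a * (R ⊓ V ^ (k + 2)) ≤ (I ⊓ V ^ a ⊔ B ⊓ V ^ a) * (R ⊓ V ^ (k + 2)) :=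
        mul_le_mul' hsplit le_rfl
    _ = (I ⊓ V ^ a) * (R ⊓ V ^ (k + 2)) ⊔ (B ⊓ V ^ a) * (R ⊓ V ^ (k + 2)) := sup_mul _ _ _
    _ ≤ golodSpan V I B R (a + (k + 2)) := by
        rw [golodSpan, hdeg]
        exact sup_le_sup hIpart hBpart

theorem pow_mul_inf_mul_pow_succ_le_golodSpan (hI : I = ⊤ * R * ⊤) (a k c : ℕ) :
    V ^ a * (R ⊓ V ^ k) * V ^ (c + 1) ≤ golodSpan V I B R (a + k + (c + 1)) := by
  refine le_sup_of_le_left ?_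
  calc V ^ a * (R ⊓ V ^ k) * V ^ (c + 1) = V ^ a * (R ⊓ V ^ k) * V ^ c * V ^ 1 := by
        rw [pow_add, ← mul_assoc]
    _ ≤ (I ⊓ V ^ (a + k + (c + 1) - 1)) * V ^ 1 := by
        refine mul_le_mul' (le_inf ?_ (pow_mul_inf_mul_pow_le R a k c)) le_rfl
        exact hI ▸ mul_le_mul' (mul_le_mul' le_top inf_le_left) le_top

theorem inf_pow_eq_golodSpan (hV : iSupIndep (V ^ ·)) (hVtop : ⨆ n, V ^ n = ⊤)
    (hRle : R ≤ ⨆ k, V ^ (k + 2)) (hRgr : R = ⨆ k, R ⊓ V ^ k) (hI : I = ⊤ * R * ⊤)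
    (hIB : I ⊔ B = ⊤) (hBgr : B = ⨆ n, B ⊓ V ^ n) {n : ℕ} (hn : 1 ≤ n) :
    I ⊓ V ^ n = golodSpan V I B R n := by
  have hR : R = ⨆ k, R ⊓ V ^ (k + 2) := hV.eq_iSup_inf_add_two hRle hRgr
  have hIgr : I = ⨆ m, I ⊓ V ^ m := by
    refine le_antisymm ?_ (iSup_le fun _ => inf_le_left)
    conv_lhs => rw [hI]
    exact top_mul_mul_top_le_iSup_inf_pow hVtop hR fun a k b =>
      hI ▸ mul_le_mul' (mul_le_mul' le_top inf_le_left) le_top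
  have hsplit (a : ℕ) : V ^ a ≤ I ⊓ V ^ a ⊔ B ⊓ V ^ a := by
    rw [← hV.sup_inf_eq_of_eq_iSup_inf hIgr hBgr, hIB, top_inf_eq]
  refine le_antisymm (hV.inf_le_of_le_iSup_inf ?_ n) (golodSpan_le_inf_pow hI hn)
  refine hI.trans_le (top_mul_mul_top_le_iSup_inf_pow hVtop hR fun a k b => ?_)
  cases b with
  | zero =>
    simpa only [pow_zero, mul_one, add_zero] using pow_mul_inf_le_golodSpan hI (hsplit a) k
  | succ c => exact pow_mul_inf_mul_pow_succ_le_golodSpan hI a (k + 2) c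

end PowersOfSubspace

theorem Finset.sum_Icc_two_eq_sum_range_reflect {M : Type*} [AddCommMonoid M] (g : ℕ → ℕ → M)
    (n : ℕ) : ∑ k ∈ Icc 2 n, g (n - k) k = ∑ j ∈ range (n - 1), g j (n - j) := by
  refine sum_nbij' (n - ·) (n - ·) ?_ ?_ ?_ ?_ ?_ <;> intro k hk <;>
    simp only [mem_Icc, mem_range] at hk ⊢
  · omega
  · omega
  · omega
  · omega
  · rw [Nat.sub_sub_self hk.2]

section FreeAlgebraGrading

variable (F : Type*) [Field F] (d : ℕ)

local notation "freeEquiv" => TensorAlgebra.equivFreeAlgebra (Pi.basisFun F (Fin d))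

theorem map_range_ι_equivFreeAlgebra :
    (LinearMap.range (TensorAlgebra.ι F)).map (freeEquiv).toLinearEquiv.toLinearMap =
      span F (Set.range (FreeAlgebra.ι F : Fin d → FreeAlgebra F (Fin d))) := by
  rw [LinearMap.range_eq_map, ← (Pi.basisFun F (Fin d)).span_eq, map_span, map_span,
    ← Set.range_comp, ← Set.range_comp]
  congr 2
  ext i
  simpa using TensorAlgebra.equivFreeAlgebra_ι_apply (Pi.basisFun F (Fin d)) i

theorem freeAlgGrade_eq_map (n : ℕ) :
    freeAlgGrade F d n =
      (LinearMap.range (TensorAlgebra.ι F) ^ n).map (freeEquiv).toLinearEquiv.toLinearMap := by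
  rw [freeAlgGrade, ← map_range_ι_equivFreeAlgebra]
  exact (Submodule.map_pow _ (freeEquiv).toAlgHom n).symm

theorem iSupIndep_freeAlgGrade : iSupIndep (freeAlgGrade F d) := by
  have h := (DirectSum.Decomposition.isInternal
    (LinearMap.range (TensorAlgebra.ι F (M := Fin d → F)) ^ ·)).submodule_iSupIndep
  rw [← iSupIndep_map_orderIso_iff (orderIsoMapComap (freeEquiv).toLinearEquiv)] at h
  convert h using 1
  funext n
  exact freeAlgGrade_eq_map F d n

theorem iSup_freeAlgGrade : ⨆ n, freeAlgGrade F d n = ⊤ := by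
  simp only [freeAlgGrade_eq_map]
  rw [← Submodule.map_iSup, (DirectSum.Decomposition.isInternal _).submodule_iSup_eq_top,
    Submodule.map_top, LinearEquiv.range]

theorem finrank_freeAlgGrade_one_le : finrank F ↥(freeAlgGrade F d 1) ≤ d := by
  rw [freeAlgGrade, pow_one]
  exact (finrank_range_le_card (R := F) (FreeAlgebra.ι F)).trans_eq (Fintype.card_fin d)

end FreeAlgebraGrading

theorem golod_graded_components_inequality_general
    (F : Type*) [Field F] (d : ℕ)
    (R I B : Submodule F (FreeAlgebra F (Fin d)))
    (hRle : R ≤ ⨆ k, freeAlgGrade F d (k + 2))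
    (hRgraded : R = ⨆ k, R ⊓ freeAlgGrade F d k)
    (hI : I = ⊤ * R * ⊤)
    (hB : IsCompl I B)
    (hBgraded : B = ⨆ n, B ⊓ freeAlgGrade F d n)
    (r : ℕ → ℕ)
    (hr : ∀ k, Module.finrank F ↥(R ⊓ freeAlgGrade F d k) ≤ r k) :
    ∀ n : ℕ, 2 ≤ n →
      (I ⊓ freeAlgGrade F d n =
        (I ⊓ freeAlgGrade F d (n - 1)) * freeAlgGrade F d 1 ⊔
          ∑ k ∈ Finset.Icc 2 n,
            (B ⊓ freeAlgGrade F d (n - k)) * (R ⊓ freeAlgGrade F d k)) ∧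
      Module.finrank F ↥(I ⊓ freeAlgGrade F d n) ≤
        d * Module.finrank F ↥(I ⊓ freeAlgGrade F d (n - 1)) +
          ∑ j ∈ Finset.range (n - 1),
            Module.finrank F ↥(B ⊓ freeAlgGrade F d j) * r (n - j) := by
  intro n hn
  have : FiniteDimensional F
      (span F (Set.range (FreeAlgebra.ι F : Fin d → FreeAlgebra F (Fin d)))) :=
    FiniteDimensional.span_of_finite F (Set.finite_range _)
  have heq : I ⊓ freeAlgGrade F d n = golodSpan _ I B R n :=
    inf_pow_eq_golodSpan (iSupIndep_freeAlgGrade F d) (iSup_freeAlgGrade F d) hRle hRgraded hI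
      hB.sup_eq_top hBgraded (by omega)
  refine ⟨heq, ?_⟩
  calc finrank F ↥(I ⊓ freeAlgGrade F d n)
      ≤ finrank F ↥(I ⊓ freeAlgGrade F d (n - 1)) * finrank F ↥(freeAlgGrade F d 1) +
        ∑ k ∈ Finset.Icc 2 n, finrank F ↥(B ⊓ freeAlgGrade F d (n - k)) * r k := by
        rw [heq]
        exact (finrank_golodSpan_le I B R n).trans
          (add_le_add le_rfl (Finset.sum_le_sum fun k _ => Nat.mul_le_mul_left _ (hr k)))
    _ ≤ d * finrank F ↥(I ⊓ freeAlgGrade F d (n - 1)) +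
        ∑ k ∈ Finset.Icc 2 n, finrank F ↥(B ⊓ freeAlgGrade F d (n - k)) * r k := by
        rw [mul_comm]
        gcongr
        exact finrank_freeAlgGrade_one_le F d
    _ = _ := by
        rw [Finset.sum_Icc_two_eq_sum_range_reflect
          (fun j k => finrank F ↥(B ⊓ freeAlgGrade F d j) * r k)]

theorem golod_graded_components_inequality
    (F : Type*) [Field F] (d : ℕ) (hd : 2 ≤ d)
    (R I B : Submodule F (FreeAlgebra F (Fin d)))
    (hRle : R ≤ ⨆ k, freeAlgGrade F d (k + 2))
    (hRgraded : R = ⨆ k, R ⊓ freeAlgGrade F d k)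
    (hI : I = ⊤ * R * ⊤)
    (hB : IsCompl I B)
    (hBgraded : B = ⨆ n, B ⊓ freeAlgGrade F d n)
    (r : ℕ → ℕ)
    (hr : ∀ k, Module.finrank F ↥(R ⊓ freeAlgGrade F d k) ≤ r k) :
    ∀ n : ℕ, 2 ≤ n →
      (I ⊓ freeAlgGrade F d n =
        (I ⊓ freeAlgGrade F d (n - 1)) * freeAlgGrade F d 1 ⊔
          ∑ k ∈ Finset.Icc 2 n,
            (B ⊓ freeAlgGrade F d (n - k)) * (R ⊓ freeAlgGrade F d k)) ∧
      Module.finrank F ↥(I ⊓ freeAlgGrade F d n) ≤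
        d * Module.finrank F ↥(I ⊓ freeAlgGrade F d (n - 1)) +
          ∑ j ∈ Finset.range (n - 1),
            Module.finrank F ↥(B ⊓ freeAlgGrade F d j) * r (n - j) :=
  golod_graded_components_inequality_general F d R I B hRle hRgraded hI hB hBgraded r hr
end
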